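/- arXiv:1603.08743 — 10 statements merged into one kernel-verified Lean document; each statement's English description precedes it below -/
import Mathlib

section
/- Every binomial identity is orderable. That is, let n be a natural number and let A, B ⊆ {0,1,…,n} be disjoint sets of indices such that ∑_{a∈A} C(n,a) = ∑_{b∈B} C(n,b). Set 𝒜 := {S ⊆ [n] : |S| ∈ A} and 𝒝 := {T ⊆ [n] : |T| ∈ B}. Then there exists a bijection Φ : 𝒜 → 𝒝 such that for every S ∈ 𝒜 we have S ⊆ Φ(S) or Φ(S) ⊆ S. -/
open Finset
set_option maxHeartbeats 1600000

lemma card_filter_superset {U S : Finset ℕ} (hSU : S ⊆ U) {b : ℕ} (hab : S.card ≤ b) :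
    ((U.powersetCard b).filter (fun T => S ⊆ T)).card
      = (U.card - S.card).choose (b - S.card) := by
  rw [← Finset.card_sdiff_of_subset hSU, ← Finset.card_powersetCard]
  apply Finset.card_bij (fun T _ => T \ S)
  · intro T hT
    simp only [Finset.mem_filter, Finset.mem_powersetCard] at hT
    obtain ⟨⟨hTU, hTc⟩, hST⟩ := hT
    rw [Finset.mem_powersetCard]
    exact ⟨Finset.sdiff_subset_sdiff hTU Finset.Subset.rfl,
      by rw [Finset.card_sdiff_of_subset hST, hTc]⟩
  · intro T1 h1 T2 h2 heq
    simp only [Finset.mem_filter, Finset.mem_powersetCard] at h1 h2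
    have := congrArg (· ∪ S) heq
    simpa [Finset.sdiff_union_of_subset h1.2, Finset.sdiff_union_of_subset h2.2] using this
  · intro R hR
    rw [Finset.mem_powersetCard] at hR
    obtain ⟨hRU, hRc⟩ := hR
    have hdisj : Disjoint S R := Finset.disjoint_left.2 fun x hxS hxR =>
      (Finset.mem_sdiff.1 (hRU hxR)).2 hxS
    refine ⟨S ∪ R, ?_, ?_⟩
    · simp only [Finset.mem_filter, Finset.mem_powersetCard]
      refine ⟨⟨Finset.union_subset hSU (hRU.trans Finset.sdiff_subset), ?_⟩,
        Finset.subset_union_left⟩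
      rw [Finset.card_union_of_disjoint hdisj, hRc, Nat.add_sub_cancel' hab]
    · rw [Finset.union_sdiff_cancel_left hdisj]

lemma filter_subset_powersetCard {U T : Finset ℕ} (hTU : T ⊆ U) (a : ℕ) :
    (U.powersetCard a).filter (fun S => S ⊆ T) = T.powersetCard a := by
  ext S
  simp only [Finset.mem_filter, Finset.mem_powersetCard]
  exact ⟨fun h => ⟨h.2, h.1.2⟩, fun h => ⟨⟨h.1.trans hTU, h.2⟩, h.1⟩⟩

noncomputable def wgt (n : ℕ) (N : ℚ) (S T : Finset ℕ) : ℚ :=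
  if S ⊆ T then (n.choose T.card : ℚ) / (N * ((n - S.card).choose (T.card - S.card) : ℕ))
  else if T ⊆ S then (n.choose T.card : ℚ) / (N * (S.card.choose T.card : ℕ))
  else 0

lemma wgt_nonneg {n : ℕ} {N : ℚ} (hN : 0 ≤ N) (S T : Finset ℕ) : 0 ≤ wgt n N S T := by
  unfold wgt; split_ifs <;> positivity

lemma wgt_eq_zero {n : ℕ} {N : ℚ} {S T : Finset ℕ} (h : ¬ (S ⊆ T ∨ T ⊆ S)) :
    wgt n N S T = 0 := by
  push_neg at h
  unfold wgt
  rw [if_neg h.1, if_neg h.2]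

lemma card_Icc_one (n : ℕ) : (Finset.Icc 1 n).card = n := by
  rw [Nat.card_Icc]; omega

lemma row_level {n : ℕ} {N : ℚ} (hN : N ≠ 0) {S : Finset ℕ} (hS : S ⊆ Finset.Icc 1 n)
    {b : ℕ} (hb : b ≤ n) (hne : b ≠ S.card) :
    ∑ T ∈ (Finset.Icc 1 n).powersetCard b, wgt n N S T = (n.choose b : ℚ) / N := by
  have ha : S.card ≤ n := by
    have := Finset.card_le_card hS
    rwa [card_Icc_one] at this
  rcases hne.lt_or_gt with hlt | hlt
  -- case b < S.card
  · have hstep : ∀ T ∈ (Finset.Icc 1 n).powersetCard b, wgt n N S T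
        = if T ⊆ S then (n.choose b : ℚ) / (N * (S.card.choose b : ℕ)) else 0 := by
      intro T hT
      rw [Finset.mem_powersetCard] at hT
      have h1 : ¬ S ⊆ T := fun h => by
        have := Finset.card_le_card h; omega
      unfold wgt
      simp only [hT.2, h1, if_false]
    rw [Finset.sum_congr rfl hstep, Finset.sum_ite, Finset.sum_const_zero, add_zero,
      Finset.sum_const, filter_subset_powersetCard hS, Finset.card_powersetCard,
      nsmul_eq_mul]
    have hc : ((S.card.choose b : ℕ) : ℚ) ≠ 0 :=
      Nat.cast_ne_zero.2 (Nat.choose_pos hlt.le).ne'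
    field_simp
  -- case S.card < b
  · have hstep : ∀ T ∈ (Finset.Icc 1 n).powersetCard b, wgt n N S T
        = if S ⊆ T then (n.choose b : ℚ) / (N * ((n - S.card).choose (b - S.card) : ℕ)) else 0 := by
      intro T hT
      rw [Finset.mem_powersetCard] at hT
      have h2 : ¬ T ⊆ S := fun h => by
        have := Finset.card_le_card h; omega
      unfold wgt
      simp only [hT.2, h2, if_false]
    rw [Finset.sum_congr rfl hstep, Finset.sum_ite, Finset.sum_const_zero, add_zero,
      Finset.sum_const, card_filter_superset hS hlt.le, card_Icc_one, nsmul_eq_mul]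
    have hc : (((n - S.card).choose (b - S.card) : ℕ) : ℚ) ≠ 0 :=
      Nat.cast_ne_zero.2 (Nat.choose_pos (by omega)).ne'
    field_simp

lemma col_level {n : ℕ} {N : ℚ} (hN : N ≠ 0) {T : Finset ℕ} (hT : T ⊆ Finset.Icc 1 n)
    {a : ℕ} (ha : a ≤ n) (hne : a ≠ T.card) :
    ∑ S ∈ (Finset.Icc 1 n).powersetCard a, wgt n N S T = (n.choose a : ℚ) / N := by
  have hb : T.card ≤ n := by
    have := Finset.card_le_card hT
    rwa [card_Icc_one] at this
  rcases hne.lt_or_gt with hlt | hlt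
  -- case a < T.card : condition is S ⊆ T
  · have hstep : ∀ S ∈ (Finset.Icc 1 n).powersetCard a, wgt n N S T
        = if S ⊆ T then (n.choose T.card : ℚ) / (N * ((n - a).choose (T.card - a) : ℕ)) else 0 := by
      intro S hS
      rw [Finset.mem_powersetCard] at hS
      have h2 : ¬ T ⊆ S := fun h => by
        have := Finset.card_le_card h; omega
      unfold wgt
      simp only [hS.2, h2, if_false]
    rw [Finset.sum_congr rfl hstep, Finset.sum_ite, Finset.sum_const_zero, add_zero,
      Finset.sum_const, filter_subset_powersetCard hT, Finset.card_powersetCard,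
      nsmul_eq_mul]
    have key : ((n.choose T.card : ℕ) : ℚ) * ((T.card.choose a : ℕ) : ℚ)
        = ((n.choose a : ℕ) : ℚ) * (((n - a).choose (T.card - a) : ℕ) : ℚ) := by
      exact_mod_cast congrArg (fun x : ℕ => (x : ℚ)) (Nat.choose_mul (n := n) hlt.le)
    have hc : (((n - a).choose (T.card - a) : ℕ) : ℚ) ≠ 0 :=
      Nat.cast_ne_zero.2 (Nat.choose_pos (by omega)).ne'
    rw [mul_div_assoc']
    rw [mul_comm ((T.card.choose a : ℕ) : ℚ) _, key, mul_comm N _, ← div_div,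
      mul_div_assoc, div_self hc, mul_one]
  -- case T.card < a : condition is T ⊆ S
  · have hstep : ∀ S ∈ (Finset.Icc 1 n).powersetCard a, wgt n N S T
        = if T ⊆ S then (n.choose T.card : ℚ) / (N * (a.choose T.card : ℕ)) else 0 := by
      intro S hS
      rw [Finset.mem_powersetCard] at hS
      have h1 : ¬ S ⊆ T := fun h => by
        have := Finset.card_le_card h; omega
      unfold wgt
      simp only [hS.2, h1, if_false]
    rw [Finset.sum_congr rfl hstep, Finset.sum_ite, Finset.sum_const_zero, add_zero,
      Finset.sum_const, card_filter_superset hT hlt.le, card_Icc_one, nsmul_eq_mul]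
    have key : (((n - T.card).choose (a - T.card) : ℕ) : ℚ) * ((n.choose T.card : ℕ) : ℚ)
        = ((n.choose a : ℕ) : ℚ) * ((a.choose T.card : ℕ) : ℚ) := by
      rw [mul_comm]
      exact_mod_cast congrArg (fun x : ℕ => (x : ℚ)) (Nat.choose_mul (n := n) hlt.le).symm
    have hc : ((a.choose T.card : ℕ) : ℚ) ≠ 0 :=
      Nat.cast_ne_zero.2 (Nat.choose_pos hlt.le).ne'
    rw [mul_div_assoc', key, mul_comm N _, ← div_div, mul_div_assoc, div_self hc, mul_one]


/-- **Every binomial identity is orderable.**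
Given disjoint index sets `A, B ⊆ {0,…,n}` with `∑_{a∈A} C(n,a) = ∑_{b∈B} C(n,b)`,
letting `𝒜 = {S ⊆ [n] : |S| ∈ A}` and `𝒝 = {T ⊆ [n] : |T| ∈ B}`, there is a bijection
`Φ : 𝒜 → 𝒝` such that each `S ∈ 𝒜` is comparable with `Φ(S)` under inclusion. -/
theorem binomial_identity_orderable (n : ℕ) (A B : Finset ℕ)
    (hA : A ⊆ Finset.range (n + 1)) (hB : B ⊆ Finset.range (n + 1))
    (hAB : Disjoint A B)
    (hid : ∑ a ∈ A, n.choose a = ∑ b ∈ B, n.choose b) :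
    ∃ Φ : Finset ℕ → Finset ℕ,
      Set.BijOn Φ
        {S : Finset ℕ | S ⊆ Finset.Icc 1 n ∧ S.card ∈ A}
        {T : Finset ℕ | T ⊆ Finset.Icc 1 n ∧ T.card ∈ B} ∧
      ∀ S : Finset ℕ, S ⊆ Finset.Icc 1 n → S.card ∈ A →
        (S ⊆ Φ S ∨ Φ S ⊆ S) := by
  classical
  have hAn : ∀ a ∈ A, a ≤ n := fun a haA => by
    have := hA haA; rw [Finset.mem_range] at this; omega
  have hBn : ∀ b ∈ B, b ≤ n := fun b hbB => by
    have := hB hbB; rw [Finset.mem_range] at this; omega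
  by_cases hAe : A = ∅
  · -- degenerate case : both families are empty
    have hBe : B = ∅ := by
      by_contra hBne
      obtain ⟨b, hb⟩ := Finset.nonempty_iff_ne_empty.2 hBne
      have h0 : ∑ b ∈ B, n.choose b = 0 := by rw [← hid, hAe]; simp
      have := Finset.sum_eq_zero_iff.1 h0 b hb
      exact absurd this (Nat.choose_pos (hBn b hb)).ne'
    refine ⟨id, ?_, ?_⟩
    · have e1 : {S : Finset ℕ | S ⊆ Finset.Icc 1 n ∧ S.card ∈ A} = ∅ := by
        ext S; simp [hAe]
      have e2 : {T : Finset ℕ | T ⊆ Finset.Icc 1 n ∧ T.card ∈ B} = ∅ := by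
        ext T; simp [hBe]
      rw [e1, e2]
      exact Set.bijOn_empty id
    · intro S _ hSA
      rw [hAe] at hSA
      simp at hSA
  -- main case
  set U : Finset ℕ := Finset.Icc 1 n with hU
  set 𝒜 : Finset (Finset ℕ) := A.biUnion (fun a => U.powersetCard a) with h𝒜
  set ℬ : Finset (Finset ℕ) := B.biUnion (fun b => U.powersetCard b) with hℬ
  have memA : ∀ S : Finset ℕ, S ∈ 𝒜 ↔ S ⊆ U ∧ S.card ∈ A := by
    intro S
    simp only [h𝒜, Finset.mem_biUnion, Finset.mem_powersetCard]
    constructor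
    · rintro ⟨a, haA, hSU, rfl⟩; exact ⟨hSU, haA⟩
    · rintro ⟨hSU, hcard⟩; exact ⟨S.card, hcard, hSU, rfl⟩
  have memB : ∀ T : Finset ℕ, T ∈ ℬ ↔ T ⊆ U ∧ T.card ∈ B := by
    intro T
    simp only [hℬ, Finset.mem_biUnion, Finset.mem_powersetCard]
    constructor
    · rintro ⟨b, hbB, hTU, rfl⟩; exact ⟨hTU, hbB⟩
    · rintro ⟨hTU, hcard⟩; exact ⟨T.card, hcard, hTU, rfl⟩
  have hNpos : 0 < ∑ b ∈ B, n.choose b := by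
    rw [← hid]
    obtain ⟨a, ha⟩ := Finset.nonempty_iff_ne_empty.2 hAe
    exact Finset.sum_pos' (fun i _ => Nat.zero_le _) ⟨a, ha, Nat.choose_pos (hAn a ha)⟩
  set N : ℚ := ((∑ b ∈ B, n.choose b : ℕ) : ℚ) with hN
  have hN0 : N ≠ 0 := by
    rw [hN]; exact_mod_cast hNpos.ne'
  have hNnn : 0 ≤ N := by rw [hN]; positivity
  have hdisjA : (A : Set ℕ).PairwiseDisjoint (fun a => U.powersetCard a) :=
    fun x _ y _ hxy => U.pairwise_disjoint_powersetCard hxy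
  have hdisjB : (B : Set ℕ).PairwiseDisjoint (fun b => U.powersetCard b) :=
    fun x _ y _ hxy => U.pairwise_disjoint_powersetCard hxy
  -- row sums
  have rowsum : ∀ S ∈ 𝒜, ∑ T ∈ ℬ, wgt n N S T = 1 := by
    intro S hS
    rw [(memA S)] at hS
    rw [hℬ, Finset.sum_biUnion hdisjB]
    have : ∀ b ∈ B, ∑ T ∈ U.powersetCard b, wgt n N S T = (n.choose b : ℚ) / N := by
      intro b hbB
      exact row_level hN0 hS.1 (hBn b hbB)
        (fun h => Finset.disjoint_left.1 hAB hS.2 (h ▸ hbB))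
    rw [Finset.sum_congr rfl this, ← Finset.sum_div]
    rw [hN]
    push_cast
    rw [div_self]
    rw [hN] at hN0
    push_cast at hN0
    exact hN0
  -- column sums
  have colsum : ∀ T ∈ ℬ, ∑ S ∈ 𝒜, wgt n N S T = 1 := by
    intro T hT
    rw [(memB T)] at hT
    rw [h𝒜, Finset.sum_biUnion hdisjA]
    have : ∀ a ∈ A, ∑ S ∈ U.powersetCard a, wgt n N S T = (n.choose a : ℚ) / N := by
      intro a haA
      exact col_level hN0 hT.1 (hAn a haA)
        (fun h => Finset.disjoint_left.1 hAB haA (h ▸ hT.2))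
    rw [Finset.sum_congr rfl this, ← Finset.sum_div]
    rw [hN, ← hid]
    push_cast
    rw [div_self]
    rw [hN, ← hid] at hN0
    push_cast at hN0
    exact hN0
  -- Hall's condition
  set r : {x // x ∈ 𝒜} → Finset (Finset ℕ) :=
    fun x => ℬ.filter (fun T => x.1 ⊆ T ∨ T ⊆ x.1) with hr
  have hall : ∀ F : Finset {x // x ∈ 𝒜}, F.card ≤ (F.biUnion r).card := by
    intro F
    have key : (F.card : ℚ) ≤ ((F.biUnion r).card : ℚ) := by
      calc (F.card : ℚ) = ∑ _x ∈ F, (1 : ℚ) := by simp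
        _ = ∑ x ∈ F, ∑ T ∈ ℬ, wgt n N x.1 T :=
            Finset.sum_congr rfl fun x _ => (rowsum x.1 x.2).symm
        _ = ∑ x ∈ F, ∑ T ∈ r x, wgt n N x.1 T :=
            Finset.sum_congr rfl fun x _ =>
              (Finset.sum_filter_of_ne fun T _ hne => by
                by_contra hcomp
                exact hne (wgt_eq_zero hcomp)).symm
        _ ≤ ∑ x ∈ F, ∑ T ∈ F.biUnion r, wgt n N x.1 T :=
            Finset.sum_le_sum fun x hx =>
              Finset.sum_le_sum_of_subset_of_nonneg
                (Finset.subset_biUnion_of_mem r hx)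
                (fun T _ _ => wgt_nonneg hNnn _ _)
        _ = ∑ T ∈ F.biUnion r, ∑ x ∈ F, wgt n N x.1 T := Finset.sum_comm
        _ ≤ ∑ T ∈ F.biUnion r, (1 : ℚ) := by
            apply Finset.sum_le_sum
            intro T hT
            obtain ⟨x, _, hTx⟩ := Finset.mem_biUnion.1 hT
            have hTB : T ∈ ℬ := (Finset.mem_filter.1 hTx).1
            calc ∑ x ∈ F, wgt n N x.1 T
                = ∑ S ∈ F.image Subtype.val, wgt n N S T := by
                  rw [Finset.sum_image (fun x _ y _ h => Subtype.val_injective h)]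
              _ ≤ ∑ S ∈ 𝒜, wgt n N S T :=
                  Finset.sum_le_sum_of_subset_of_nonneg
                    (fun S hS => by
                      obtain ⟨x, _, rfl⟩ := Finset.mem_image.1 hS
                      exact x.2)
                    (fun S _ _ => wgt_nonneg hNnn _ _)
              _ = 1 := colsum T hTB
        _ = ((F.biUnion r).card : ℚ) := by simp
    exact_mod_cast key
  obtain ⟨f, hfinj, hfr⟩ :=
    (Finset.all_card_le_biUnion_card_iff_exists_injective r).1 hall
  -- cardinalities
  have cardA : 𝒜.card = ∑ a ∈ A, n.choose a := by
    rw [h𝒜, Finset.card_biUnion (fun x _ y _ hxy => U.pairwise_disjoint_powersetCard hxy)]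
    exact Finset.sum_congr rfl fun a _ => by
      rw [Finset.card_powersetCard, card_Icc_one]
  have cardB : ℬ.card = ∑ b ∈ B, n.choose b := by
    rw [hℬ, Finset.card_biUnion (fun x _ y _ hxy => U.pairwise_disjoint_powersetCard hxy)]
    exact Finset.sum_congr rfl fun b _ => by
      rw [Finset.card_powersetCard, card_Icc_one]
  have hcards : 𝒜.card = ℬ.card := by rw [cardA, cardB, hid]
  have himsub : Finset.univ.image f ⊆ ℬ := by
    intro T hT
    obtain ⟨x, _, rfl⟩ := Finset.mem_image.1 hT
    exact (Finset.mem_filter.1 (hfr x)).1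
  have himage : Finset.univ.image f = ℬ := by
    apply Finset.eq_of_subset_of_card_le himsub
    rw [Finset.card_image_of_injective _ hfinj, Finset.card_univ, Fintype.card_coe, ← hcards]
  -- the bijection
  refine ⟨fun S => if h : S ∈ 𝒜 then f ⟨S, h⟩ else S, ⟨?_, ?_, ?_⟩, ?_⟩
  · -- MapsTo
    intro S hS
    have hS' : S ∈ 𝒜 := (memA S).2 hS
    simp only [hS', dif_pos]
    have := (Finset.mem_filter.1 (hfr ⟨S, hS'⟩)).1
    exact (memB _).1 this
  · -- InjOn
    intro S hS S' hS' heq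
    have h1 : S ∈ 𝒜 := (memA S).2 hS
    have h2 : S' ∈ 𝒜 := (memA S').2 hS'
    simp only [h1, h2, dif_pos] at heq
    exact congrArg Subtype.val (hfinj heq)
  · -- SurjOn
    intro T hT
    have hT' : T ∈ ℬ := (memB T).2 hT
    rw [← himage] at hT'
    obtain ⟨x, _, rfl⟩ := Finset.mem_image.1 hT'
    refine ⟨x.1, (memA x.1).1 x.2, ?_⟩
    simp only [x.2, dif_pos]
  · -- comparability
    intro S hSU hSA
    have hS' : S ∈ 𝒜 := (memA S).2 ⟨hSU, hSA⟩
    simp only [hS', dif_pos]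
    exact (Finset.mem_filter.1 (hfr ⟨S, hS'⟩)).2
end

section
/- (Strict local LYM inequality.) Let n be a natural number, 0 ≤ a ≤ n, 0 ≤ b ≤ n with b ≠ a, and let 𝒮 be a nonempty family of a-element subsets of [n] that is a proper subfamily of 𝒞ⁿ_a (i.e., ∅ ≠ 𝒮 ⊊ 𝒞ⁿ_a). Then |Sh_b(𝒮)| · C(n,a) > |𝒮| · C(n,b). -/
open Finset

/-- The `b`-shadow of a family `𝒮` of `a`-element subsets of `[n] = {1,…,n}`:
all `b`-element subsets of `[n]` contained in some member of `𝒮` (if `b ≤ a`),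
resp. containing some member of `𝒮` (if `b ≥ a`). -/
def Sh (n a b : ℕ) (𝒮 : Finset (Finset ℕ)) : Finset (Finset ℕ) :=
  if b ≤ a then
    ((Finset.Icc 1 n).powersetCard b).filter (fun T => ∃ S ∈ 𝒮, T ⊆ S)
  else
    ((Finset.Icc 1 n).powersetCard b).filter (fun T => ∃ S ∈ 𝒮, S ⊆ T)

lemma count_supersets {G T : Finset ℕ} {a : ℕ} (hTG : T ⊆ G) (hTa : T.card ≤ a) :
    ((G.powersetCard a).filter (fun S => T ⊆ S)).card
      = (G.card - T.card).choose (a - T.card) := by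
  have key : ((G.powersetCard a).filter (fun S => T ⊆ S)).card
      = ((G \ T).powersetCard (a - T.card)).card := by
    apply Finset.card_bij' (fun S _ => S \ T) (fun U _ => U ∪ T)
    · intro S hS
      simp only [mem_filter, mem_powersetCard] at hS
      obtain ⟨⟨hSG, hSa⟩, hTS⟩ := hS
      rw [mem_powersetCard]
      exact ⟨sdiff_subset_sdiff hSG Subset.rfl, by rw [card_sdiff_of_subset hTS, hSa]⟩
    · intro U hU
      rw [mem_powersetCard] at hU
      obtain ⟨hUG, hUc⟩ := hU
      have hdisj : Disjoint U T := sdiff_disjoint.mono_left hUG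
      rw [mem_filter, mem_powersetCard]
      refine ⟨⟨union_subset (hUG.trans (sdiff_subset)) hTG, ?_⟩, subset_union_right⟩
      rw [card_union_of_disjoint hdisj, hUc, Nat.sub_add_cancel hTa]
    · intro S hS
      simp only [mem_filter, mem_powersetCard] at hS
      exact sdiff_union_of_subset hS.2
    · intro U hU
      rw [mem_powersetCard] at hU
      exact union_sdiff_cancel_right (sdiff_disjoint.mono_left hU.1)
  rw [key, card_powersetCard, card_sdiff_of_subset hTG]

/-- There is an adjacent pair: a member of `𝒮` and a non-member obtained by a single swap. -/
lemma adj_pair (n a : ℕ) (𝒮 : Finset (Finset ℕ))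
    (h𝒮 : 𝒮 ⊆ (Finset.Icc 1 n).powersetCard a) :
    ∀ k (S U : Finset ℕ), S ∈ 𝒮 → U ⊆ Finset.Icc 1 n → U.card = a → U ∉ 𝒮 →
      (S \ U).card = k →
      ∃ A ∈ 𝒮, ∃ x ∈ A, ∃ y, y ∈ Finset.Icc 1 n ∧ y ∉ A ∧ insert y (A.erase x) ∉ 𝒮 := by
  intro k
  induction k with
  | zero =>
    intro S U hS hUG hUa hU hcard
    exfalso
    have hSG := mem_powersetCard.1 (h𝒮 hS)
    have hsub : S ⊆ U := by
      rw [← sdiff_eq_empty_iff_subset]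
      exact card_eq_zero.1 hcard
    have : S = U := eq_of_subset_of_card_le hsub (by rw [hUa, hSG.2])
    exact hU (this ▸ hS)
  | succ k ih =>
    intro S U hS hUG hUa hU hcard
    have hSG := mem_powersetCard.1 (h𝒮 hS)
    have hx : (S \ U).Nonempty := by
      rw [← card_pos, hcard]; exact Nat.succ_pos k
    obtain ⟨x, hxSU⟩ := hx
    have hy : (U \ S).Nonempty := by
      rw [← card_pos, card_sdiff_comm (by rw [hUa, hSG.2]), hcard]
      exact Nat.succ_pos k
    obtain ⟨y, hyUS⟩ := hy
    have hxS : x ∈ S := (mem_sdiff.1 hxSU).1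
    have hxU : x ∉ U := (mem_sdiff.1 hxSU).2
    have hyU : y ∈ U := (mem_sdiff.1 hyUS).1
    have hyS : y ∉ S := (mem_sdiff.1 hyUS).2
    by_cases hS1 : insert y (S.erase x) ∈ 𝒮
    · -- recurse
      apply ih (insert y (S.erase x)) U hS1 hUG hUa hU
      have : insert y (S.erase x) \ U = (S \ U).erase x := by
        ext z
        simp only [mem_sdiff, mem_insert, mem_erase]
        constructor
        · rintro ⟨hz1 | ⟨hz1, hz2⟩, hz3⟩
          · exact absurd (hz1 ▸ hyU) hz3
          · exact ⟨hz1, hz2, hz3⟩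
        · rintro ⟨hz1, hz2, hz3⟩
          exact ⟨Or.inr ⟨hz1, hz2⟩, hz3⟩
      rw [this, card_erase_of_mem hxSU, hcard]
      rfl
    · exact ⟨S, hS, x, hxS, y, hUG hyU, hyS, hS1⟩

lemma sum_swap_count (𝒜 ℬ : Finset (Finset ℕ)) :
    ∑ T ∈ 𝒜, (ℬ.filter (fun S => T ⊆ S)).card
      = ∑ S ∈ ℬ, (𝒜.filter (fun T => T ⊆ S)).card := by
  simp only [card_filter]
  exact Finset.sum_comm

/-- **Strict local LYM inequality.** If `∅ ≠ 𝒮 ⊊ 𝒞ⁿ_a` and `b ≠ a` (with `a, b ≤ n`),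
then `|Sh_b(𝒮)| · C(n,a) > |𝒮| · C(n,b)`. -/
theorem strict_local_LYM (n a b : ℕ) (ha : a ≤ n) (hb : b ≤ n) (hba : b ≠ a)
    (𝒮 : Finset (Finset ℕ)) (hne : 𝒮.Nonempty)
    (hproper : 𝒮 ⊂ (Finset.Icc 1 n).powersetCard a) :
    (Sh n a b 𝒮).card * n.choose a > 𝒮.card * n.choose b := by
  set G := Finset.Icc 1 n with hGdef
  have hG : G.card = n := by rw [hGdef, Nat.card_Icc]; omega
  have h𝒮G := hproper.subset
  -- an adjacent pair
  obtain ⟨U, hUmem, hU𝒮⟩ := exists_of_ssubset hproper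
  obtain ⟨S₀, hS₀⟩ := hne
  have hUG := (mem_powersetCard.1 hUmem).1
  have hUa := (mem_powersetCard.1 hUmem).2
  obtain ⟨A, hA, x, hxA, y, hyG, hyA, hB⟩ :=
    adj_pair n a 𝒮 h𝒮G (S₀ \ U).card S₀ U hS₀ hUG hUa hU𝒮 rfl
  have hAG := mem_powersetCard.1 (h𝒮G hA)
  set B := insert y (A.erase x) with hBdef
  have hBG : B ⊆ G := by
    rw [hBdef]
    exact insert_subset hyG ((erase_subset x A).trans hAG.1)
  have hBa : B.card = a := by
    rw [hBdef, card_insert_of_notMem (fun h => hyA (erase_subset x A h)),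
      card_erase_of_mem hxA, hAG.2]
    have : 1 ≤ a := by
      rw [← hAG.2]; exact card_pos.2 ⟨x, hxA⟩
    omega
  have hBmem : B ∈ G.powersetCard a := mem_powersetCard.2 ⟨hBG, hBa⟩
  have hapos : 0 < a := by
    rw [← hAG.2]; exact card_pos.2 ⟨x, hxA⟩
  have hAerase : A.erase x ⊆ A ∩ B := by
    intro z hz
    rw [mem_inter]
    exact ⟨erase_subset x A hz, hBdef ▸ mem_insert_of_mem hz⟩
  rcases lt_or_gt_of_ne hba with hlt | hgt
  · -- case b < a : shadow downwards
    have hSh : Sh n a b 𝒮 = (G.powersetCard b).filter (fun T => ∃ S ∈ 𝒮, T ⊆ S) := by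
      rw [Sh, if_pos hlt.le]
    -- T₀ : a b-subset of A.erase x
    have hcardAe : b ≤ (A.erase x).card := by
      rw [card_erase_of_mem hxA, hAG.2]; omega
    obtain ⟨T₀, hT₀sub, hT₀card⟩ := exists_subset_card_eq hcardAe
    have hT₀A : T₀ ⊆ A := hT₀sub.trans (erase_subset x A)
    have hT₀Sh : T₀ ∈ Sh n a b 𝒮 := by
      rw [hSh, mem_filter, mem_powersetCard]
      exact ⟨⟨hT₀A.trans hAG.1, hT₀card⟩, A, hA, hT₀A⟩
    have hT₀B : T₀ ⊆ B := fun z hz => hBdef ▸ mem_insert_of_mem (hT₀sub hz)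
    -- the main strict sum inequality
    have hstrict : ∑ T ∈ Sh n a b 𝒮, (𝒮.filter (fun S => T ⊆ S)).card
        < ∑ T ∈ Sh n a b 𝒮, ((G.powersetCard a).filter (fun S => T ⊆ S)).card := by
      apply Finset.sum_lt_sum
      · intro T _
        exact card_le_card (filter_subset_filter _ h𝒮G)
      · refine ⟨T₀, hT₀Sh, ?_⟩
        apply card_lt_card
        constructor
        · exact filter_subset_filter _ h𝒮G
        · intro hsub
          have : B ∈ 𝒮.filter (fun S => T₀ ⊆ S) :=
            hsub (mem_filter.2 ⟨hBmem, hT₀B⟩)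
          exact hB (mem_filter.1 this).1
    -- RHS evaluation
    have hRHS : ∑ T ∈ Sh n a b 𝒮, ((G.powersetCard a).filter (fun S => T ⊆ S)).card
        = (Sh n a b 𝒮).card * (n - b).choose (a - b) := by
      rw [Finset.sum_congr rfl (fun T hT => ?_), Finset.sum_const, smul_eq_mul]
      rw [hSh, mem_filter, mem_powersetCard] at hT
      rw [count_supersets hT.1.1 (hT.1.2 ▸ hlt.le), hT.1.2, hG]
    -- LHS evaluation
    have hLHS : ∑ T ∈ Sh n a b 𝒮, (𝒮.filter (fun S => T ⊆ S)).card
        = 𝒮.card * a.choose b := by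
      rw [sum_swap_count, Finset.sum_congr rfl (fun S hS => ?_), Finset.sum_const, smul_eq_mul]
      have hSG := mem_powersetCard.1 (h𝒮G hS)
      have : (Sh n a b 𝒮).filter (fun T => T ⊆ S) = S.powersetCard b := by
        ext T
        rw [mem_filter, hSh, mem_filter, mem_powersetCard, mem_powersetCard]
        constructor
        · rintro ⟨⟨⟨_, hTb⟩, _⟩, hTS⟩
          exact ⟨hTS, hTb⟩
        · rintro ⟨hTS, hTb⟩
          exact ⟨⟨⟨hTS.trans hSG.1, hTb⟩, S, hS, hTS⟩, hTS⟩
      rw [this, card_powersetCard, hSG.2]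
    rw [hLHS, hRHS] at hstrict
    -- arithmetic
    have hchoose : n.choose a * a.choose b = n.choose b * (n - b).choose (a - b) :=
      Nat.choose_mul hlt.le
    have hnb : 0 < n.choose b := Nat.choose_pos hb
    have hab : 0 < a.choose b := Nat.choose_pos hlt.le
    have := (Nat.mul_lt_mul_right hnb).2 hstrict
    rw [show 𝒮.card * a.choose b * n.choose b = 𝒮.card * n.choose b * a.choose b by ring,
      show (Sh n a b 𝒮).card * (n - b).choose (a - b) * n.choose b
        = (Sh n a b 𝒮).card * (n.choose b * (n - b).choose (a - b)) by ring,
      ← hchoose,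
      show (Sh n a b 𝒮).card * (n.choose a * a.choose b)
        = (Sh n a b 𝒮).card * n.choose a * a.choose b by ring] at this
    exact Nat.lt_of_mul_lt_mul_right this
  · -- case b > a : shadow upwards
    have hSh : Sh n a b 𝒮 = (G.powersetCard b).filter (fun T => ∃ S ∈ 𝒮, S ⊆ T) := by
      rw [Sh, if_neg (by omega)]
    -- T₀ : a b-superset of insert y A
    have hiA : insert y A ⊆ G := insert_subset hyG hAG.1
    have hiAcard : (insert y A).card ≤ b := by
      rw [card_insert_of_notMem hyA, hAG.2]; omega
    obtain ⟨T₀, hT₀sup, hT₀G, hT₀card⟩ :=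
      exists_subsuperset_card_eq hiA hiAcard (by rw [hG]; exact hb)
    have hAT₀ : A ⊆ T₀ := (subset_insert y A).trans hT₀sup
    have hT₀Sh : T₀ ∈ Sh n a b 𝒮 := by
      rw [hSh, mem_filter, mem_powersetCard]
      exact ⟨⟨hT₀G, hT₀card⟩, A, hA, hAT₀⟩
    have hBT₀ : B ⊆ T₀ := by
      rw [hBdef]
      exact insert_subset (hT₀sup (mem_insert_self y A))
        ((erase_subset x A).trans hAT₀)
    have hstrict : ∑ T ∈ Sh n a b 𝒮, (𝒮.filter (fun S => S ⊆ T)).card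
        < ∑ T ∈ Sh n a b 𝒮, ((G.powersetCard a).filter (fun S => S ⊆ T)).card := by
      apply Finset.sum_lt_sum
      · intro T _
        exact card_le_card (filter_subset_filter _ h𝒮G)
      · refine ⟨T₀, hT₀Sh, ?_⟩
        apply card_lt_card
        constructor
        · exact filter_subset_filter _ h𝒮G
        · intro hsub
          have : B ∈ 𝒮.filter (fun S => S ⊆ T₀) :=
            hsub (mem_filter.2 ⟨hBmem, hBT₀⟩)
          exact hB (mem_filter.1 this).1
    have hRHS : ∑ T ∈ Sh n a b 𝒮, ((G.powersetCard a).filter (fun S => S ⊆ T)).card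
        = (Sh n a b 𝒮).card * b.choose a := by
      rw [Finset.sum_congr rfl (fun T hT => ?_), Finset.sum_const, smul_eq_mul]
      rw [hSh, mem_filter, mem_powersetCard] at hT
      have : (G.powersetCard a).filter (fun S => S ⊆ T) = T.powersetCard a := by
        ext S
        rw [mem_filter, mem_powersetCard, mem_powersetCard]
        constructor
        · rintro ⟨⟨_, hSa⟩, hST⟩
          exact ⟨hST, hSa⟩
        · rintro ⟨hST, hSa⟩
          exact ⟨⟨hST.trans hT.1.1, hSa⟩, hST⟩
      rw [this, card_powersetCard, hT.1.2]
    have hLHS : ∑ T ∈ Sh n a b 𝒮, (𝒮.filter (fun S => S ⊆ T)).card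
        = 𝒮.card * (n - a).choose (b - a) := by
      rw [← sum_swap_count, Finset.sum_congr rfl (fun S hS => ?_), Finset.sum_const, smul_eq_mul]
      have hSG := mem_powersetCard.1 (h𝒮G hS)
      have : (Sh n a b 𝒮).filter (fun T => S ⊆ T)
          = (G.powersetCard b).filter (fun T => S ⊆ T) := by
        ext T
        simp only [hSh, mem_filter]
        constructor
        · rintro ⟨⟨hT, _⟩, hST⟩
          exact ⟨hT, hST⟩
        · rintro ⟨hT, hST⟩
          exact ⟨⟨hT, S, hS, hST⟩, hST⟩
      rw [this, count_supersets hSG.1 (hSG.2 ▸ hgt.le), hSG.2, hG]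
    rw [hLHS, hRHS] at hstrict
    have hchoose : n.choose b * b.choose a = n.choose a * (n - a).choose (b - a) :=
      Nat.choose_mul hgt.le
    have hna : 0 < n.choose a := Nat.choose_pos ha
    have hba' : 0 < b.choose a := Nat.choose_pos hgt.le
    have := (Nat.mul_lt_mul_right hna).2 hstrict
    rw [show 𝒮.card * (n - a).choose (b - a) * n.choose a
        = 𝒮.card * (n.choose a * (n - a).choose (b - a)) by ring,
      ← hchoose,
      show 𝒮.card * (n.choose b * b.choose a) = 𝒮.card * n.choose b * b.choose a by ring,
      show (Sh n a b 𝒮).card * b.choose a * n.choose a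
        = (Sh n a b 𝒮).card * n.choose a * b.choose a by ring] at this
    exact Nat.lt_of_mul_lt_mul_right this
end

section
/- Let n be a natural number, 0 ≤ a ≤ n, let 𝒮 be a family of a-element subsets of [n], and let B ⊆ {0,1,…,n} be nonempty with a ∉ B. Then equality |Sh_B(𝒮)| · C(n,a) = |𝒮| · ∑_{b∈B} C(n,b) holds if and only if 𝒮 = ∅ or 𝒮 = 𝒞ⁿ_a (the family of all a-element subsets of [n]). -/
/-- The `B`-shadow `Sh_B(𝒮) = ⋃_{b ∈ B} Sh_b(𝒮)`. -/
def ShB (n a : ℕ) (B : Finset ℕ) (𝒮 : Finset (Finset ℕ)) : Finset (Finset ℕ) :=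
  B.biUnion (fun b => Sh n a b 𝒮)

open Finset

/-- Number of `k`-subsets of `G` containing a fixed subset `T`. -/
lemma card_filter_supset {G T : Finset ℕ} (hTG : T ⊆ G) {k : ℕ} (hk : T.card ≤ k) :
    ((G.powersetCard k).filter (fun S => T ⊆ S)).card
      = (G.card - T.card).choose (k - T.card) := by
  classical
  have h1 : ((G \ T).powersetCard (k - T.card)).card
      = (G.card - T.card).choose (k - T.card) := by
    rw [Finset.card_powersetCard, Finset.card_sdiff_of_subset hTG]
  rw [← h1]
  apply Finset.card_bij' (fun S _ => S \ T) (fun U _ => U ∪ T)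
  · intro S hS
    simp only [mem_filter, mem_powersetCard] at hS
    obtain ⟨⟨hSG, hSk⟩, hTS⟩ := hS
    simp only [mem_powersetCard]
    refine ⟨sdiff_subset_sdiff hSG le_rfl, ?_⟩
    rw [card_sdiff_of_subset hTS, hSk]
  · intro U hU
    simp only [mem_powersetCard] at hU
    obtain ⟨hUG, hUc⟩ := hU
    have hdisj : Disjoint U T := Finset.disjoint_of_subset_left hUG (Finset.sdiff_disjoint)
    simp only [mem_filter, mem_powersetCard]
    refine ⟨⟨union_subset (hUG.trans sdiff_subset) hTG, ?_⟩, subset_union_right⟩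
    rw [card_union_of_disjoint hdisj, hUc]
    omega
  · intro S hS
    simp only [mem_filter, mem_powersetCard] at hS
    exact sdiff_union_of_subset hS.2
  · intro U hU
    simp only [mem_powersetCard] at hU
    have hdisj : Disjoint U T := Finset.disjoint_of_subset_left hU.1 (Finset.sdiff_disjoint)
    exact union_sdiff_cancel_right hdisj

lemma full_of_swap {G : Finset ℕ} {a : ℕ} {𝒮 : Finset (Finset ℕ)}
    (h𝒮 : 𝒮 ⊆ G.powersetCard a) (hne : 𝒮.Nonempty)
    (hswap : ∀ S ∈ 𝒮, ∀ x ∈ S, ∀ y ∈ G, y ∉ S → insert y (S.erase x) ∈ 𝒮) :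
    𝒮 = G.powersetCard a := by
  classical
  refine Finset.Subset.antisymm h𝒮 fun S' hS' => ?_
  obtain ⟨S₀, hS₀⟩ := hne
  have key : ∀ k, ∀ S ∈ 𝒮, (S' \ S).card ≤ k → S' ∈ 𝒮 := by
    intro k
    induction k with
    | zero =>
      intro S hS h0
      have he : S' \ S = ∅ := card_eq_zero.mp (Nat.le_zero.mp h0)
      have hsub : S' ⊆ S := sdiff_eq_empty_iff_subset.mp he
      have hcards : S.card ≤ S'.card := by
        rw [(mem_powersetCard.mp (h𝒮 hS)).2, (mem_powersetCard.mp hS').2]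
      have := Finset.eq_of_subset_of_card_le hsub hcards
      rwa [this]
    | succ k ih =>
      intro S hS hcard
      by_cases h0 : (S' \ S).card = 0
      · exact ih S hS (by omega)
      · obtain ⟨y, hy⟩ := card_pos.mp (Nat.pos_of_ne_zero h0)
        have hyS' : y ∈ S' := (mem_sdiff.mp hy).1
        have hyS : y ∉ S := (mem_sdiff.mp hy).2
        have hScard : S.card = a := (mem_powersetCard.mp (h𝒮 hS)).2
        have hS'card : S'.card = a := (mem_powersetCard.mp hS').2
        have hxne : (S \ S').Nonempty := by
          rw [← card_pos, card_sdiff_comm (by rw [hScard, hS'card])]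
          exact card_pos.mpr ⟨y, hy⟩
        obtain ⟨x, hxmem⟩ := hxne
        have hxS : x ∈ S := (mem_sdiff.mp hxmem).1
        have hxS' : x ∉ S' := (mem_sdiff.mp hxmem).2
        have hyG : y ∈ G := (mem_powersetCard.mp hS').1 hyS'
        have hnew : insert y (S.erase x) ∈ 𝒮 := hswap S hS x hxS y hyG hyS
        apply ih _ hnew
        have hsub : S' \ insert y (S.erase x) ⊆ (S' \ S).erase y := by
          intro z hz
          simp only [mem_sdiff, mem_insert, mem_erase, not_or] at hz
          obtain ⟨hz1, hz2, hz3⟩ := hz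
          simp only [mem_erase, mem_sdiff]
          refine ⟨hz2, hz1, fun hzS => ?_⟩
          by_cases hzx : z = x
          · exact hxS' (hzx ▸ hz1)
          · exact hz3 ⟨hzx, hzS⟩
        calc (S' \ insert y (S.erase x)).card
            ≤ ((S' \ S).erase y).card := card_le_card hsub
          _ = (S' \ S).card - 1 := card_erase_of_mem hy
          _ ≤ k := by omega
  exact key (S' \ S₀).card S₀ hS₀ le_rfl

lemma mem_Sh_lower {n a b : ℕ} (hba : b ≤ a) {𝒮 : Finset (Finset ℕ)} {T : Finset ℕ} :
    T ∈ Sh n a b 𝒮 ↔ (T ⊆ Finset.Icc 1 n ∧ T.card = b) ∧ ∃ S ∈ 𝒮, T ⊆ S := by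
  unfold Sh
  rw [if_pos hba, mem_filter, mem_powersetCard]

lemma mem_Sh_upper {n a b : ℕ} (hba : a < b) {𝒮 : Finset (Finset ℕ)} {T : Finset ℕ} :
    T ∈ Sh n a b 𝒮 ↔ (T ⊆ Finset.Icc 1 n ∧ T.card = b) ∧ ∃ S ∈ 𝒮, S ⊆ T := by
  unfold Sh
  rw [if_neg (by omega), mem_filter, mem_powersetCard]

lemma Sh_mem_powersetCard {n a b : ℕ} {𝒮 : Finset (Finset ℕ)} {T : Finset ℕ}
    (hT : T ∈ Sh n a b 𝒮) : T ⊆ Finset.Icc 1 n ∧ T.card = b := by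
  unfold Sh at hT
  split at hT <;> exact mem_powersetCard.mp (mem_filter.mp hT).1

/-- Double count (lower case): each member of `𝒮` has exactly `C(a,b)` subsets of
size `b`, all of which lie in the shadow. -/
lemma sum_deg_lower {n a b : ℕ} (hba : b ≤ a) {𝒮 : Finset (Finset ℕ)}
    (h𝒮 : 𝒮 ⊆ (Finset.Icc 1 n).powersetCard a) :
    ∑ T ∈ Sh n a b 𝒮, (𝒮.filter (fun S => T ⊆ S)).card = 𝒮.card * a.choose b := by
  classical
  have hdc := Finset.sum_card_bipartiteAbove_eq_sum_card_bipartiteBelow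
    (r := fun (T S : Finset ℕ) => T ⊆ S) (s := Sh n a b 𝒮) (t := 𝒮)
  simp only [Finset.bipartiteAbove, Finset.bipartiteBelow] at hdc
  rw [hdc]
  rw [Finset.sum_congr rfl (fun S hS => ?_)]
  · rw [Finset.sum_const, smul_eq_mul]
  · have hSmem := mem_powersetCard.mp (h𝒮 hS)
    have : (Sh n a b 𝒮).filter (fun T => T ⊆ S) = S.powersetCard b := by
      ext T
      simp only [mem_filter, mem_powersetCard, mem_Sh_lower hba]
      constructor
      · rintro ⟨⟨⟨-, hTb⟩, -⟩, hTS⟩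
        exact ⟨hTS, hTb⟩
      · rintro ⟨hTS, hTb⟩
        exact ⟨⟨⟨hTS.trans hSmem.1, hTb⟩, S, hS, hTS⟩, hTS⟩
    rw [this, Finset.card_powersetCard, hSmem.2]

/-- Double count (upper case). -/
lemma sum_deg_upper {n a b : ℕ} (hab : a < b) {𝒮 : Finset (Finset ℕ)}
    (h𝒮 : 𝒮 ⊆ (Finset.Icc 1 n).powersetCard a) :
    ∑ T ∈ Sh n a b 𝒮, (𝒮.filter (fun S => S ⊆ T)).card
      = 𝒮.card * (n - a).choose (b - a) := by
  classical
  have hdc := Finset.sum_card_bipartiteAbove_eq_sum_card_bipartiteBelow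
    (r := fun (T S : Finset ℕ) => S ⊆ T) (s := Sh n a b 𝒮) (t := 𝒮)
  simp only [Finset.bipartiteAbove, Finset.bipartiteBelow] at hdc
  rw [hdc]
  rw [Finset.sum_congr rfl (fun S hS => ?_)]
  · rw [Finset.sum_const, smul_eq_mul]
  · have hSmem := mem_powersetCard.mp (h𝒮 hS)
    have : (Sh n a b 𝒮).filter (fun T => S ⊆ T)
        = ((Finset.Icc 1 n).powersetCard b).filter (fun T => S ⊆ T) := by
      ext T
      simp only [mem_filter, mem_powersetCard, mem_Sh_upper hab]
      constructor
      · rintro ⟨⟨h1, -⟩, hST⟩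
        exact ⟨h1, hST⟩
      · rintro ⟨h1, hST⟩
        exact ⟨⟨h1, S, hS, hST⟩, hST⟩
    rw [this, card_filter_supset hSmem.1 (by omega : S.card ≤ b), hSmem.2, card_Icc_one]

lemma deg_le_lower {n a b : ℕ} (hba : b ≤ a) {𝒮 : Finset (Finset ℕ)}
    (h𝒮 : 𝒮 ⊆ (Finset.Icc 1 n).powersetCard a) {T : Finset ℕ} (hT : T ∈ Sh n a b 𝒮) :
    (𝒮.filter (fun S => T ⊆ S)).card ≤ (n - b).choose (a - b) ∧
    (((Finset.Icc 1 n).powersetCard a).filter (fun S => T ⊆ S)).card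
      = (n - b).choose (a - b) := by
  classical
  obtain ⟨hTG, hTb⟩ := Sh_mem_powersetCard hT
  have hA : (((Finset.Icc 1 n).powersetCard a).filter (fun S => T ⊆ S)).card
      = (n - b).choose (a - b) := by
    rw [card_filter_supset hTG (by omega : T.card ≤ a), hTb, card_Icc_one]
  exact ⟨hA ▸ card_le_card (Finset.filter_subset_filter _ h𝒮), hA⟩

lemma deg_le_upper {n a b : ℕ} {𝒮 : Finset (Finset ℕ)}
    (h𝒮 : 𝒮 ⊆ (Finset.Icc 1 n).powersetCard a) {T : Finset ℕ}
    (hT : T ∈ Sh n a b 𝒮) :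
    (𝒮.filter (fun S => S ⊆ T)).card ≤ b.choose a ∧
    (T.powersetCard a).card = b.choose a := by
  classical
  obtain ⟨hTG, hTb⟩ := Sh_mem_powersetCard hT
  have hA : (T.powersetCard a).card = b.choose a := by
    rw [Finset.card_powersetCard, hTb]
  refine ⟨hA ▸ card_le_card ?_, hA⟩
  intro S hS
  rw [mem_filter] at hS
  exact mem_powersetCard.mpr ⟨hS.2, (mem_powersetCard.mp (h𝒮 hS.1)).2⟩

/-- Local LYM inequality. -/
lemma LYM_ineq {n a b : ℕ} (ha : a ≤ n) (hb : b ≤ n) {𝒮 : Finset (Finset ℕ)}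
    (h𝒮 : 𝒮 ⊆ (Finset.Icc 1 n).powersetCard a) :
    𝒮.card * n.choose b ≤ (Sh n a b 𝒮).card * n.choose a := by
  classical
  rcases le_or_gt b a with hba | hab
  · have hsum := sum_deg_lower hba h𝒮
    have hle : ∑ T ∈ Sh n a b 𝒮, (𝒮.filter (fun S => T ⊆ S)).card
        ≤ (Sh n a b 𝒮).card * (n - b).choose (a - b) := by
      rw [← smul_eq_mul, ← Finset.sum_const]
      exact Finset.sum_le_sum fun T hT => (deg_le_lower hba h𝒮 hT).1
    have hid : n.choose a * a.choose b = n.choose b * (n - b).choose (a - b) :=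
      Nat.choose_mul hba
    have hpos : 0 < a.choose b := Nat.choose_pos hba
    have key : 𝒮.card * n.choose b * a.choose b
        ≤ (Sh n a b 𝒮).card * n.choose a * a.choose b := by
      calc 𝒮.card * n.choose b * a.choose b
          = (𝒮.card * a.choose b) * n.choose b := by ring
        _ ≤ ((Sh n a b 𝒮).card * (n - b).choose (a - b)) * n.choose b :=
            Nat.mul_le_mul_right _ (hsum ▸ hle)
        _ = (Sh n a b 𝒮).card * (n.choose b * (n - b).choose (a - b)) := by ring
        _ = (Sh n a b 𝒮).card * (n.choose a * a.choose b) := by rw [← hid]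
        _ = (Sh n a b 𝒮).card * n.choose a * a.choose b := by ring
    exact Nat.le_of_mul_le_mul_right key hpos
  · have hsum := sum_deg_upper hab h𝒮
    have hle : ∑ T ∈ Sh n a b 𝒮, (𝒮.filter (fun S => S ⊆ T)).card
        ≤ (Sh n a b 𝒮).card * b.choose a := by
      rw [← smul_eq_mul, ← Finset.sum_const]
      exact Finset.sum_le_sum fun T hT => (deg_le_upper h𝒮 hT).1
    have hid : n.choose b * b.choose a = n.choose a * (n - a).choose (b - a) :=
      Nat.choose_mul hab.le
    have hpos : 0 < b.choose a := Nat.choose_pos hab.le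
    have key : 𝒮.card * n.choose b * b.choose a
        ≤ (Sh n a b 𝒮).card * n.choose a * b.choose a := by
      calc 𝒮.card * n.choose b * b.choose a
          = 𝒮.card * (n.choose b * b.choose a) := by ring
        _ = 𝒮.card * (n.choose a * (n - a).choose (b - a)) := by rw [hid]
        _ = (𝒮.card * (n - a).choose (b - a)) * n.choose a := by ring
        _ ≤ ((Sh n a b 𝒮).card * b.choose a) * n.choose a :=
            Nat.mul_le_mul_right _ (hsum ▸ hle)
        _ = (Sh n a b 𝒮).card * n.choose a * b.choose a := by ring
    exact Nat.le_of_mul_le_mul_right key hpos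

/-- Pointwise equality of degrees from sum equality. -/
lemma deg_const_of_sum_eq {𝒯 : Finset (Finset ℕ)} {f : Finset ℕ → ℕ} {c : ℕ}
    (hle : ∀ T ∈ 𝒯, f T ≤ c) (hsum : ∑ T ∈ 𝒯, f T = 𝒯.card * c) :
    ∀ T ∈ 𝒯, f T = c := by
  intro T hT
  by_contra hne
  have hlt : f T < c := lt_of_le_of_ne (hle T hT) hne
  have : ∑ T ∈ 𝒯, f T < ∑ _T ∈ 𝒯, c :=
    Finset.sum_lt_sum hle ⟨T, hT, hlt⟩
  rw [Finset.sum_const, smul_eq_mul] at this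
  omega

/-- Equality case, lower shadow (`b < a`). -/
lemma eq_case_lower {n a b : ℕ} (ha : a ≤ n) (hb : b ≤ n) (hba : b < a)
    {𝒮 : Finset (Finset ℕ)} (h𝒮 : 𝒮 ⊆ (Finset.Icc 1 n).powersetCard a)
    (hne : 𝒮.Nonempty)
    (heq : (Sh n a b 𝒮).card * n.choose a = 𝒮.card * n.choose b) :
    𝒮 = (Finset.Icc 1 n).powersetCard a := by
  classical
  set 𝒯 := Sh n a b 𝒮 with h𝒯
  have hsum := sum_deg_lower hba.le h𝒮
  have hid : n.choose a * a.choose b = n.choose b * (n - b).choose (a - b) :=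
    Nat.choose_mul hba.le
  have hnb : 0 < n.choose b := Nat.choose_pos hb
  -- sum of degrees equals 𝒯.card * C(n-b, a-b)
  have hsum_eq : ∑ T ∈ 𝒯, (𝒮.filter (fun S => T ⊆ S)).card
      = 𝒯.card * (n - b).choose (a - b) := by
    have key : (∑ T ∈ 𝒯, (𝒮.filter (fun S => T ⊆ S)).card) * n.choose b
        = (𝒯.card * (n - b).choose (a - b)) * n.choose b := by
      calc (∑ T ∈ 𝒯, (𝒮.filter (fun S => T ⊆ S)).card) * n.choose b
          = (𝒮.card * a.choose b) * n.choose b := by rw [hsum]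
        _ = (𝒮.card * n.choose b) * a.choose b := by ring
        _ = (𝒯.card * n.choose a) * a.choose b := by rw [heq]
        _ = 𝒯.card * (n.choose a * a.choose b) := by ring
        _ = 𝒯.card * (n.choose b * (n - b).choose (a - b)) := by rw [hid]
        _ = (𝒯.card * (n - b).choose (a - b)) * n.choose b := by ring
    exact Nat.eq_of_mul_eq_mul_right hnb key
  have hdeg : ∀ T ∈ 𝒯, (𝒮.filter (fun S => T ⊆ S)).card = (n - b).choose (a - b) :=
    deg_const_of_sum_eq (fun T hT => (deg_le_lower hba.le h𝒮 hT).1) hsum_eq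
  -- every a-subset of [n] containing some T ∈ 𝒯 lies in 𝒮
  have hfull : ∀ T ∈ 𝒯, ∀ S' : Finset ℕ, S' ⊆ Finset.Icc 1 n → S'.card = a → T ⊆ S' →
      S' ∈ 𝒮 := by
    intro T hT S' hS'G hS'a hTS'
    have hAeq : 𝒮.filter (fun S => T ⊆ S)
        = ((Finset.Icc 1 n).powersetCard a).filter (fun S => T ⊆ S) := by
      apply Finset.eq_of_subset_of_card_le (Finset.filter_subset_filter _ h𝒮)
      rw [(deg_le_lower hba.le h𝒮 hT).2, hdeg T hT]
    have : S' ∈ 𝒮.filter (fun S => T ⊆ S) := by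
      rw [hAeq, mem_filter, mem_powersetCard]
      exact ⟨⟨hS'G, hS'a⟩, hTS'⟩
    exact (mem_filter.mp this).1
  -- swap closure
  apply full_of_swap h𝒮 hne
  intro S hS x hx y hyG hyS
  obtain ⟨hSG, hSa⟩ := mem_powersetCard.mp (h𝒮 hS)
  have herase : (S.erase x).card = a - 1 := by rw [card_erase_of_mem hx, hSa]
  obtain ⟨T, hTsub, hTb⟩ := Finset.exists_subset_card_eq
    (show b ≤ (S.erase x).card by omega)
  have hT𝒯 : T ∈ 𝒯 := by
    rw [h𝒯, mem_Sh_lower hba.le]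
    exact ⟨⟨(hTsub.trans (erase_subset _ _)).trans hSG, hTb⟩,
      S, hS, hTsub.trans (erase_subset _ _)⟩
  have hyE : y ∉ S.erase x := fun h => hyS (mem_of_mem_erase h)
  refine hfull T hT𝒯 _ ?_ ?_ ?_
  · exact insert_subset hyG ((erase_subset _ _).trans hSG)
  · rw [card_insert_of_notMem hyE, herase]; omega
  · exact hTsub.trans (subset_insert _ _)

/-- Equality case, upper shadow (`a < b`). -/
lemma eq_case_upper {n a b : ℕ} (ha : a ≤ n) (hb : b ≤ n) (hab : a < b)
    {𝒮 : Finset (Finset ℕ)} (h𝒮 : 𝒮 ⊆ (Finset.Icc 1 n).powersetCard a)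
    (hne : 𝒮.Nonempty)
    (heq : (Sh n a b 𝒮).card * n.choose a = 𝒮.card * n.choose b) :
    𝒮 = (Finset.Icc 1 n).powersetCard a := by
  classical
  set 𝒯 := Sh n a b 𝒮 with h𝒯
  have hsum := sum_deg_upper hab h𝒮
  have hid : n.choose b * b.choose a = n.choose a * (n - a).choose (b - a) :=
    Nat.choose_mul hab.le
  have hnb : 0 < n.choose b := Nat.choose_pos hb
  have hsum_eq : ∑ T ∈ 𝒯, (𝒮.filter (fun S => S ⊆ T)).card = 𝒯.card * b.choose a := by
    have key : (∑ T ∈ 𝒯, (𝒮.filter (fun S => S ⊆ T)).card) * n.choose b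
        = (𝒯.card * b.choose a) * n.choose b := by
      calc (∑ T ∈ 𝒯, (𝒮.filter (fun S => S ⊆ T)).card) * n.choose b
          = (𝒮.card * (n - a).choose (b - a)) * n.choose b := by rw [hsum]
        _ = (𝒮.card * n.choose b) * (n - a).choose (b - a) := by ring
        _ = (𝒯.card * n.choose a) * (n - a).choose (b - a) := by rw [heq]
        _ = 𝒯.card * (n.choose a * (n - a).choose (b - a)) := by ring
        _ = 𝒯.card * (n.choose b * b.choose a) := by rw [hid]
        _ = (𝒯.card * b.choose a) * n.choose b := by ring
    exact Nat.eq_of_mul_eq_mul_right hnb key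
  have hdeg : ∀ T ∈ 𝒯, (𝒮.filter (fun S => S ⊆ T)).card = b.choose a :=
    deg_const_of_sum_eq (fun T hT => (deg_le_upper h𝒮 hT).1) hsum_eq
  have hfull : ∀ T ∈ 𝒯, ∀ S' : Finset ℕ, S' ⊆ T → S'.card = a → S' ∈ 𝒮 := by
    intro T hT S' hS'T hS'a
    have hsub : 𝒮.filter (fun S => S ⊆ T) ⊆ T.powersetCard a := by
      intro S hSm
      rw [mem_filter] at hSm
      exact mem_powersetCard.mpr ⟨hSm.2, (mem_powersetCard.mp (h𝒮 hSm.1)).2⟩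
    have hAeq : 𝒮.filter (fun S => S ⊆ T) = T.powersetCard a := by
      apply Finset.eq_of_subset_of_card_le hsub
      rw [(deg_le_upper h𝒮 hT).2, hdeg T hT]
    have : S' ∈ 𝒮.filter (fun S => S ⊆ T) := by
      rw [hAeq, mem_powersetCard]; exact ⟨hS'T, hS'a⟩
    exact (mem_filter.mp this).1
  apply full_of_swap h𝒮 hne
  intro S hS x hx y hyG hyS
  obtain ⟨hSG, hSa⟩ := mem_powersetCard.mp (h𝒮 hS)
  have hins : (insert y S).card = a + 1 := by rw [card_insert_of_notMem hyS, hSa]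
  obtain ⟨T, hT1, hT2, hT3⟩ := Finset.exists_subsuperset_card_eq
    (insert_subset hyG hSG) (show (insert y S).card ≤ b by omega)
    (show b ≤ (Finset.Icc 1 n).card by rw [card_Icc_one]; exact hb)
  have hT𝒯 : T ∈ 𝒯 := by
    rw [h𝒯, mem_Sh_upper hab]
    exact ⟨⟨hT2, hT3⟩, S, hS, (subset_insert _ _).trans hT1⟩
  have hyE : y ∉ S.erase x := fun h => hyS (mem_of_mem_erase h)
  refine hfull T hT𝒯 _ ?_ ?_
  · exact insert_subset (hT1 (mem_insert_self _ _))
      (((erase_subset _ _).trans (subset_insert _ _)).trans hT1)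
  · rw [card_insert_of_notMem hyE, card_erase_of_mem hx, hSa]
    have : 0 < a := hSa ▸ card_pos.mpr ⟨x, hx⟩
    omega

lemma Sh_empty (n a b : ℕ) : Sh n a b ∅ = ∅ := by
  unfold Sh
  split <;> simp

lemma ShB_card {n a : ℕ} {B : Finset ℕ} {𝒮 : Finset (Finset ℕ)} :
    (ShB n a B 𝒮).card = ∑ b ∈ B, (Sh n a b 𝒮).card := by
  classical
  rw [ShB, Finset.card_biUnion]
  intro b hb b' hb' hne
  rw [Function.onFun, Finset.disjoint_left]
  intro T h1 h2
  exact hne ((Sh_mem_powersetCard h1).2 ▸ (Sh_mem_powersetCard h2).2)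

lemma Sh_full {n a b : ℕ} (ha : a ≤ n) (hb : b ≤ n) :
    Sh n a b ((Finset.Icc 1 n).powersetCard a) = (Finset.Icc 1 n).powersetCard b := by
  classical
  rcases le_or_gt b a with hba | hab
  · ext T
    rw [mem_Sh_lower hba]
    constructor
    · rintro ⟨⟨h1, h2⟩, -⟩; exact mem_powersetCard.mpr ⟨h1, h2⟩
    · intro hT
      obtain ⟨hTG, hTb⟩ := mem_powersetCard.mp hT
      obtain ⟨S, hTS, hSG, hSa⟩ := Finset.exists_subsuperset_card_eq hTG
        (show T.card ≤ a by omega) (show a ≤ (Finset.Icc 1 n).card by rw [card_Icc_one]; exact ha)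
      exact ⟨⟨hTG, hTb⟩, S, mem_powersetCard.mpr ⟨hSG, hSa⟩, hTS⟩
  · ext T
    rw [mem_Sh_upper hab]
    constructor
    · rintro ⟨⟨h1, h2⟩, -⟩; exact mem_powersetCard.mpr ⟨h1, h2⟩
    · intro hT
      obtain ⟨hTG, hTb⟩ := mem_powersetCard.mp hT
      obtain ⟨S, hST, hSa⟩ := Finset.exists_subset_card_eq (show a ≤ T.card by omega)
      exact ⟨⟨hTG, hTb⟩, S, mem_powersetCard.mpr ⟨hST.trans hTG, hSa⟩, hST⟩

/-- For a family `𝒮` of `a`-element subsets of `[n]` and a nonempty `B ⊆ {0,…,n}` with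
`a ∉ B`, equality `|Sh_B(𝒮)| · C(n,a) = |𝒮| · ∑_{b ∈ B} C(n,b)` holds if and only if
`𝒮 = ∅` or `𝒮 = 𝒞ⁿ_a`. -/
theorem local_LYM_B_equality_iff (n a : ℕ) (ha : a ≤ n) (B : Finset ℕ)
    (hB : B ⊆ Finset.range (n + 1)) (hBne : B.Nonempty) (haB : a ∉ B)
    (𝒮 : Finset (Finset ℕ)) (h𝒮 : 𝒮 ⊆ (Finset.Icc 1 n).powersetCard a) :
    (ShB n a B 𝒮).card * n.choose a = 𝒮.card * ∑ b ∈ B, n.choose b ↔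
      𝒮 = ∅ ∨ 𝒮 = (Finset.Icc 1 n).powersetCard a := by
  classical
  have hbn : ∀ b ∈ B, b ≤ n := fun b hb => by
    have := Finset.mem_range.mp (hB hb); omega
  constructor
  · intro heq
    by_cases hSe : 𝒮 = ∅
    · exact Or.inl hSe
    right
    have hne : 𝒮.Nonempty := Finset.nonempty_iff_ne_empty.mpr hSe
    -- rewrite both sides as sums over B
    rw [ShB_card, Finset.sum_mul, Finset.mul_sum] at heq
    have hpt : ∀ b ∈ B, 𝒮.card * n.choose b ≤ (Sh n a b 𝒮).card * n.choose a :=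
      fun b hb => LYM_ineq ha (hbn b hb) h𝒮
    -- sums equal with pointwise ≥ gives pointwise =
    have hpteq : ∀ b ∈ B, (Sh n a b 𝒮).card * n.choose a = 𝒮.card * n.choose b := by
      intro b hb
      by_contra hneq
      have hlt : 𝒮.card * n.choose b < (Sh n a b 𝒮).card * n.choose a :=
        lt_of_le_of_ne (hpt b hb) (fun h => hneq h.symm)
      have : ∑ b ∈ B, 𝒮.card * n.choose b < ∑ b ∈ B, (Sh n a b 𝒮).card * n.choose a :=
        Finset.sum_lt_sum hpt ⟨b, hb, hlt⟩
      omega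
    obtain ⟨b₀, hb₀⟩ := hBne
    have hb₀n : b₀ ≤ n := hbn b₀ hb₀
    have hb₀a : b₀ ≠ a := fun h => haB (h ▸ hb₀)
    rcases lt_or_gt_of_ne hb₀a with hlt | hgt
    · exact eq_case_lower ha hb₀n hlt h𝒮 hne (hpteq b₀ hb₀)
    · exact eq_case_upper ha hb₀n hgt h𝒮 hne (hpteq b₀ hb₀)
  · rintro (rfl | rfl)
    · have : ShB n a B ∅ = ∅ := by
        rw [ShB]
        apply Finset.eq_empty_of_forall_notMem
        intro T hT
        obtain ⟨b, -, hTb⟩ := Finset.mem_biUnion.mp hT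
        rw [Sh_empty] at hTb
        exact absurd hTb (Finset.notMem_empty T)
      simp [this]
    · rw [ShB_card]
      have hcard : ∀ b ∈ B, (Sh n a b ((Finset.Icc 1 n).powersetCard a)).card = n.choose b := by
        intro b hb
        rw [Sh_full ha (hbn b hb), Finset.card_powersetCard, card_Icc_one]
      rw [Finset.sum_congr rfl hcard, Finset.card_powersetCard, card_Icc_one]
      ring
end

section
/- (Surplus version of the Hall condition for binomial identities.) Let n be a natural number and let A, B ⊆ {0,1,…,n} be disjoint sets with ∑_{a∈A} C(n,a) = ∑_{b∈B} C(n,b). Set 𝒜 := {S ⊆ [n] : |S| ∈ A} and 𝒝 := {T ⊆ [n] : |T| ∈ B}. Then for every 𝒵 ⊆ 𝒜 with 𝒵 ≠ ∅ and 𝒵 ≠ 𝒜, the set N(𝒵) := {T ∈ 𝒝 : there exists S ∈ 𝒵 with S ⊆ T or T ⊆ S} satisfies |N(𝒵)| ≥ |𝒵| + 1. -/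
section BinomialHallHelpers
open Finset

lemma count_sup (G S : Finset ℕ) (t : ℕ) (hSG : S ⊆ G) (hst : S.card ≤ t) :
    ((G.powersetCard t).filter (fun T => S ⊆ T)).card = (G.card - S.card).choose (t - S.card) := by
  have hcd : (G \ S).card = G.card - S.card := card_sdiff_of_subset hSG
  rw [← hcd, ← Finset.card_powersetCard]
  apply Finset.card_bij' (fun T _ => T \ S) (fun U _ => U ∪ S)
  · intro T hT
    simp only [mem_filter, mem_powersetCard] at hT
    obtain ⟨⟨hTG, hTc⟩, hST⟩ := hT
    simp only [mem_powersetCard]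
    exact ⟨sdiff_subset_sdiff hTG (le_refl S), by rw [card_sdiff_of_subset hST, hTc]⟩
  · intro U hU
    simp only [mem_powersetCard] at hU
    obtain ⟨hUG, hUc⟩ := hU
    have hUS : Disjoint U S := by
      exact disjoint_of_subset_left hUG sdiff_disjoint
    simp only [mem_filter, mem_powersetCard]
    refine ⟨⟨union_subset (hUG.trans sdiff_subset) hSG, ?_⟩, subset_union_right⟩
    rw [card_union_of_disjoint hUS, hUc]
    omega
  · intro T hT
    simp only [mem_filter, mem_powersetCard] at hT
    exact sdiff_union_of_subset hT.2
  · intro U hU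
    simp only [mem_powersetCard] at hU
    have hUS : Disjoint U S := disjoint_of_subset_left hU.1 sdiff_disjoint
    exact union_sdiff_cancel_right hUS

lemma count_sub (G S : Finset ℕ) (t : ℕ) (hSG : S ⊆ G) :
    ((G.powersetCard t).filter (fun T => T ⊆ S)).card = S.card.choose t := by
  rw [← Finset.card_powersetCard t S]
  congr 1
  ext T
  simp only [mem_filter, mem_powersetCard]
  exact ⟨fun h => ⟨h.2, h.1.2⟩, fun h => ⟨⟨h.1.trans hSG, h.2⟩, h.1⟩⟩

lemma adj_aux (G : Finset ℕ) (a : ℕ) (X : Finset (Finset ℕ)) (hX : X ⊆ G.powersetCard a) :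
    ∀ k (S S' : Finset ℕ), (S \ S').card = k → S ∈ X → S' ∈ G.powersetCard a → S' ∉ X →
    ∃ U ∈ X, ∃ V ∈ G.powersetCard a, V ∉ X ∧ (U \ V).card = 1 := by
  intro k
  induction k using Nat.strong_induction_on with
  | _ k IH =>
    intro S S' hk hS hS'mem hS'X
    have hSlev := mem_powersetCard.1 (hX hS)
    have hS' := mem_powersetCard.1 hS'mem
    have hne : S ≠ S' := fun h => hS'X (h ▸ hS)
    have hcards : S.card = S'.card := by rw [hSlev.2, hS'.2]
    have hSS' : (S \ S').Nonempty := by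
      rw [sdiff_nonempty]
      intro hsub
      exact hne (eq_of_subset_of_card_le hsub (le_of_eq hcards.symm))
    rcases Nat.lt_or_ge k 2 with hk2 | hk2
    · have hk1 : (S \ S').card = 1 := by
        have := hSS'.card_pos
        omega
      exact ⟨S, hS, S', hS'mem, hS'X, hk1⟩
    · obtain ⟨x, hx⟩ := hSS'
      have hS'S : (S' \ S).Nonempty := by
        rw [← card_pos, card_sdiff_comm hcards.symm, hk]
        omega
      obtain ⟨y, hy⟩ := hS'S
      simp only [mem_sdiff] at hx hy
      set S₁ := insert y (S.erase x) with hS₁def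
      have hyS : y ∉ S.erase x := fun h => hy.2 (mem_of_mem_erase h)
      have hS₁card : S₁.card = a := by
        rw [card_insert_of_notMem hyS, card_erase_of_mem hx.1]
        have : 1 ≤ S.card := card_pos.2 ⟨x, hx.1⟩
        omega
      have hS₁G : S₁ ⊆ G := by
        intro z hz
        rcases mem_insert.1 hz with h | h
        · exact hS'.1 (h ▸ hy.1)
        · exact hSlev.1 (mem_of_mem_erase h)
      have hS₁lev : S₁ ∈ G.powersetCard a := mem_powersetCard.2 ⟨hS₁G, hS₁card⟩
      by_cases hS₁X : S₁ ∈ X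
      · have hstep : S₁ \ S' = (S \ S').erase x := by
          rw [hS₁def, insert_sdiff_of_mem _ hy.1]
          ext z
          simp only [mem_sdiff, mem_erase]
          tauto
        have hcard1 : (S₁ \ S').card = k - 1 := by
          rw [hstep, card_erase_of_mem (mem_sdiff.2 hx), hk]
        exact IH (k-1) (by omega) S₁ S' hcard1 hS₁X hS'mem hS'X
      · refine ⟨S, hS, S₁, hS₁lev, hS₁X, ?_⟩
        have hsing : S \ S₁ = {x} := by
          ext z
          simp only [hS₁def, mem_sdiff, mem_insert, mem_erase, mem_singleton]
          constructor
          · rintro ⟨hzS, h⟩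
            by_contra hzx
            exact h (Or.inr ⟨hzx, hzS⟩)
          · rintro rfl
            exact ⟨hx.1, fun h => h.elim (fun h' => hy.2 (h' ▸ hx.1)) (fun h' => h'.1 rfl)⟩
        rw [hsing, card_singleton]

lemma adj_pair_s5 (G : Finset ℕ) (a : ℕ) (X : Finset (Finset ℕ))
    (hX : X ⊆ G.powersetCard a) (h1 : X.Nonempty) (h2 : X ≠ G.powersetCard a) :
    ∃ U ∈ X, ∃ V ∈ G.powersetCard a, V ∉ X ∧ (U \ V).card = 1 := by
  obtain ⟨S, hS⟩ := h1
  obtain ⟨S', hS'mem, hS'X⟩ := exists_of_ssubset (lt_of_le_of_ne hX h2)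
  exact adj_aux G a X hX _ S S' rfl hS hS'mem hS'X

lemma key_lemma (n a b : ℕ) (ha : a ≤ n) (hb : b ≤ n) (hab : a ≠ b)
    (X : Finset (Finset ℕ)) (hX : X ⊆ (Finset.Icc 1 n).powersetCard a)
    (hne : X.Nonempty) (hprop : X ≠ (Finset.Icc 1 n).powersetCard a) :
    X.card * n.choose b <
      ((((Finset.Icc 1 n).powersetCard b).filter (fun T => ∃ S ∈ X, S ⊆ T ∨ T ⊆ S)).card) *
        n.choose a := by
  set G := Finset.Icc 1 n with hGdef
  have hG : G.card = n := by rw [hGdef, Nat.card_Icc]; omega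
  set L := G.powersetCard b with hLdef
  set N := L.filter (fun T => ∃ S ∈ X, S ⊆ T ∨ T ⊆ S) with hNdef
  -- adjacent pair
  obtain ⟨U, hUX, V, hVlev, hVX, hUV⟩ := adj_pair_s5 G a X hX hne hprop
  have hUlev := mem_powersetCard.1 (hX hUX)
  have hV := mem_powersetCard.1 hVlev
  -- construct T₀ comparable to both U and V
  obtain ⟨T₀, hT₀lev, hT₀U, hT₀V⟩ :
      ∃ T₀ ∈ L, (U ⊆ T₀ ∨ T₀ ⊆ U) ∧ (V ⊆ T₀ ∨ T₀ ⊆ V) := by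
    rcases Nat.lt_or_ge a b with h | h
    · have hcup : (U ∪ V).card = 1 + a := by
        rw [← card_sdiff_add_card]
        rw [hUV, hV.2]
      obtain ⟨T₀, hT₁, hT₂, hT₃⟩ := exists_subsuperset_card_eq
        (union_subset hUlev.1 hV.1) (by omega : (U ∪ V).card ≤ b) (by omega : b ≤ G.card)
      exact ⟨T₀, mem_powersetCard.2 ⟨hT₂, hT₃⟩,
        Or.inl ((subset_union_left).trans hT₁), Or.inl ((subset_union_right).trans hT₁)⟩
    · have h' : b < a := lt_of_le_of_ne h (Ne.symm hab)
      have hcap : (U ∩ V).card = a - 1 := by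
        have h1 : (U \ V).card + (U ∩ V).card = U.card := by
          rw [card_sdiff_add_card_inter]
        omega
      obtain ⟨T₀, hT₁, hT₂⟩ := exists_subset_card_eq (by omega : b ≤ (U ∩ V).card)
      refine ⟨T₀, mem_powersetCard.2 ⟨(hT₁.trans inter_subset_left).trans hUlev.1, hT₂⟩,
        Or.inr (hT₁.trans inter_subset_left), Or.inr (hT₁.trans inter_subset_right)⟩
  have hT₀N : T₀ ∈ N := mem_filter.2 ⟨hT₀lev, U, hUX, hT₀U⟩
  -- degrees
  set r : Finset ℕ → Finset ℕ → Prop := fun S T => S ⊆ T ∨ T ⊆ S with hrdef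
  set da := if a < b then (n-a).choose (b-a) else a.choose b with hdadef
  set db := if a < b then b.choose a else (n-b).choose (a-b) with hdbdef
  have hda : ∀ S ∈ X, (L.filter (fun T => r S T)).card = da := by
    intro S hS
    have hSlev := mem_powersetCard.1 (hX hS)
    rcases Nat.lt_or_ge a b with h | h
    · have : L.filter (fun T => r S T) = L.filter (fun T => S ⊆ T) := by
        apply filter_congr
        intro T hT
        have hTc := (mem_powersetCard.1 hT).2
        simp only [hrdef, eq_iff_iff]
        constructor
        · rintro (h1 | h1)
          · exact h1
          · exfalso
            have := card_le_card h1
            omega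
        · exact Or.inl
      rw [this, hLdef, count_sup G S b hSlev.1 (by omega), hG, hSlev.2, hdadef, if_pos h]
    · have h' : b < a := lt_of_le_of_ne h (Ne.symm hab)
      have : L.filter (fun T => r S T) = L.filter (fun T => T ⊆ S) := by
        apply filter_congr
        intro T hT
        have hTc := (mem_powersetCard.1 hT).2
        simp only [hrdef, eq_iff_iff]
        constructor
        · rintro (h1 | h1)
          · exfalso
            have := card_le_card h1
            omega
          · exact h1
        · exact Or.inr
      rw [this, hLdef, count_sub G S b hSlev.1, hSlev.2, hdadef, if_neg (by omega)]
  have hdb : ∀ T ∈ L, ((G.powersetCard a).filter (fun S => r S T)).card = db := by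
    intro T hT
    have hTlev := mem_powersetCard.1 hT
    rcases Nat.lt_or_ge a b with h | h
    · have : (G.powersetCard a).filter (fun S => r S T)
          = (G.powersetCard a).filter (fun S => S ⊆ T) := by
        apply filter_congr
        intro S hS
        have hSc := (mem_powersetCard.1 hS).2
        simp only [hrdef, eq_iff_iff]
        constructor
        · rintro (h1 | h1)
          · exact h1
          · exfalso; have := card_le_card h1; omega
        · exact Or.inl
      rw [this, count_sub G T a hTlev.1, hTlev.2, hdbdef, if_pos h]
    · have h' : b < a := lt_of_le_of_ne h (Ne.symm hab)
      have : (G.powersetCard a).filter (fun S => r S T)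
          = (G.powersetCard a).filter (fun S => T ⊆ S) := by
        apply filter_congr
        intro S hS
        have hSc := (mem_powersetCard.1 hS).2
        simp only [hrdef, eq_iff_iff]
        constructor
        · rintro (h1 | h1)
          · exfalso; have := card_le_card h1; omega
          · exact h1
        · exact Or.inr
      rw [this, count_sup G T a hTlev.1 (by omega), hG, hTlev.2, hdbdef, if_neg (by omega)]
  -- double counting
  have hedges : X.card * da = ∑ T ∈ L, (X.filter (fun S => r S T)).card := by
    have h1 : ∑ S ∈ X, (L.bipartiteAbove r S).card = ∑ T ∈ L, (X.bipartiteBelow r T).card :=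
      sum_card_bipartiteAbove_eq_sum_card_bipartiteBelow r
    calc X.card * da = ∑ S ∈ X, da := by rw [sum_const, smul_eq_mul, mul_comm]
    _ = ∑ S ∈ X, (L.bipartiteAbove r S).card := by
        apply sum_congr rfl
        intro S hS
        rw [bipartiteAbove, hda S hS]
    _ = ∑ T ∈ L, (X.bipartiteBelow r T).card := h1
    _ = ∑ T ∈ L, (X.filter (fun S => r S T)).card := rfl
  have hrestrict : ∑ T ∈ L, (X.filter (fun S => r S T)).card
      = ∑ T ∈ N, (X.filter (fun S => r S T)).card := by
    rw [hNdef]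
    apply (sum_filter_of_ne _).symm
    intro T hT hne0
    obtain ⟨S, hS⟩ := card_pos.1 (Nat.pos_of_ne_zero hne0)
    obtain ⟨hSX, hSr⟩ := mem_filter.1 hS
    exact ⟨S, hSX, hSr⟩
  have hubound : ∀ T ∈ N, (X.filter (fun S => r S T)).card ≤ db := by
    intro T hT
    have hTL : T ∈ L := (mem_filter.1 hT).1
    rw [← hdb T hTL]
    exact card_le_card (fun S hS => mem_filter.2 ⟨hX (mem_filter.1 hS).1, (mem_filter.1 hS).2⟩)
  have hstrict : (X.filter (fun S => r S T₀)).card < db := by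
    rw [← hdb T₀ ((mem_filter.1 hT₀N).1)]
    apply lt_of_le_of_lt (card_le_card (s := X.filter (fun S => r S T₀))
      (t := ((G.powersetCard a).filter (fun S => r S T₀)).erase V) ?_)
    · exact card_erase_lt_of_mem (mem_filter.2 ⟨hVlev, hT₀V⟩)
    · intro S hS
      obtain ⟨hSX, hSr⟩ := mem_filter.1 hS
      refine mem_erase.2 ⟨fun h => hVX (h ▸ hSX), mem_filter.2 ⟨hX hSX, hSr⟩⟩
  have hmain : X.card * da < N.card * db := by
    rw [hedges, hrestrict]
    calc ∑ T ∈ N, (X.filter (fun S => r S T)).card < ∑ T ∈ N, db := by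
          apply sum_lt_sum hubound ⟨T₀, hT₀N, hstrict⟩
    _ = N.card * db := by rw [sum_const, smul_eq_mul]
  -- convert via choose identity
  rcases Nat.lt_or_ge a b with h | h
  · rw [hdadef, if_pos h] at hmain
    rw [hdbdef, if_pos h] at hmain
    have hid : n.choose b * b.choose a = n.choose a * (n - a).choose (b - a) :=
      Nat.choose_mul (le_of_lt h)
    have h2 : X.card * n.choose b * b.choose a < N.card * n.choose a * b.choose a := by
      calc X.card * n.choose b * b.choose a = X.card * (n.choose b * b.choose a) := by ring
      _ = n.choose a * (X.card * (n - a).choose (b - a)) := by rw [hid]; ring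
      _ < n.choose a * (N.card * b.choose a) :=
          mul_lt_mul_of_pos_left hmain (Nat.choose_pos ha)
      _ = N.card * n.choose a * b.choose a := by ring
    exact Nat.lt_of_mul_lt_mul_right h2
  · have h' : b < a := lt_of_le_of_ne h (Ne.symm hab)
    rw [hdadef, if_neg (by omega)] at hmain
    rw [hdbdef, if_neg (by omega)] at hmain
    have hid : n.choose a * a.choose b = n.choose b * (n - b).choose (a - b) :=
      Nat.choose_mul (le_of_lt h')
    have h2 : X.card * n.choose b * (n - b).choose (a - b)
        < N.card * n.choose a * (n - b).choose (a - b) := by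
      calc X.card * n.choose b * (n - b).choose (a - b)
          = X.card * (n.choose b * (n - b).choose (a - b)) := by ring
      _ = n.choose a * (X.card * a.choose b) := by rw [← hid]; ring
      _ < n.choose a * (N.card * (n - b).choose (a - b)) :=
          mul_lt_mul_of_pos_left hmain (Nat.choose_pos ha)
      _ = N.card * n.choose a * (n - b).choose (a - b) := by ring
    exact Nat.lt_of_mul_lt_mul_right h2

end BinomialHallHelpers

open Finset in
/-- **Surplus version of the Hall condition for binomial identities.**
Given a binomial identity with disjoint index sets `A, B ⊆ {0,…,n}`, with associated
families `𝒜 = {S ⊆ [n] : |S| ∈ A}` and `𝒝 = {T ⊆ [n] : |T| ∈ B}`, every `𝒵 ⊆ 𝒜`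
with `𝒵 ≠ ∅` and `𝒵 ≠ 𝒜` satisfies `|N(𝒵)| ≥ |𝒵| + 1`, where `N(𝒵)` is the set of
members of `𝒝` comparable under inclusion with some member of `𝒵`. -/
theorem binomial_identity_hall_surplus (n : ℕ) (A B : Finset ℕ)
    (hA : A ⊆ Finset.range (n + 1)) (hB : B ⊆ Finset.range (n + 1))
    (hAB : Disjoint A B)
    (hid : ∑ a ∈ A, n.choose a = ∑ b ∈ B, n.choose b)
    (𝒵 : Finset (Finset ℕ))
    (h𝒵 : 𝒵 ⊆ ((Finset.Icc 1 n).powerset).filter (fun S => S.card ∈ A))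
    (hne : 𝒵 ≠ ∅)
    (hprop : 𝒵 ≠ ((Finset.Icc 1 n).powerset).filter (fun S => S.card ∈ A)) :
    𝒵.card + 1 ≤
      ((((Finset.Icc 1 n).powerset).filter (fun T => T.card ∈ B)).filter
        (fun T => ∃ S ∈ 𝒵, S ⊆ T ∨ T ⊆ S)).card := by
  classical
  set G := Finset.Icc 1 n with hGdef
  have hGc : G.card = n := by rw [hGdef, Nat.card_Icc]; omega
  set 𝒜f := G.powerset.filter (fun S => S.card ∈ A) with h𝒜def
  set 𝒝f := G.powerset.filter (fun T => T.card ∈ B) with h𝒝def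
  set N := 𝒝f.filter (fun T => ∃ S ∈ 𝒵, S ⊆ T ∨ T ⊆ S) with hNdef
  have hAle : ∀ a ∈ A, a ≤ n := fun a ha => by
    have := hA ha; rw [mem_range] at this; omega
  have hBle : ∀ b ∈ B, b ≤ n := fun b hb => by
    have := hB hb; rw [mem_range] at this; omega
  have h𝒵ne : 𝒵.Nonempty := nonempty_iff_ne_empty.2 hne
  obtain ⟨S₀, hS₀⟩ := h𝒵ne
  have hS₀A : S₀.card ∈ A := (mem_filter.1 (h𝒵 hS₀)).2
  have hAne : A.Nonempty := ⟨S₀.card, hS₀A⟩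
  have hBne : B.Nonempty := by
    rw [nonempty_iff_ne_empty]
    intro hBemp
    rw [hBemp, sum_empty] at hid
    have : 0 < ∑ a ∈ A, n.choose a :=
      sum_pos (fun a ha => Nat.choose_pos (hAle a ha)) hAne
    omega
  -- family cardinalities
  have fam_card : ∀ (C : Finset ℕ),
      (G.powerset.filter (fun S => S.card ∈ C)).card = ∑ c ∈ C, n.choose c := by
    intro C
    rw [card_eq_sum_card_fiberwise (f := Finset.card) (s := G.powerset.filter (fun S => S.card ∈ C)) (t := C)
      (fun S hS => (mem_filter.1 hS).2)]
    apply sum_congr rfl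
    intro c hc
    have hfib : (G.powerset.filter (fun S => S.card ∈ C)).filter (fun S => S.card = c)
        = G.powersetCard c := by
      ext S
      simp only [mem_filter, mem_powerset, mem_powersetCard]
      constructor
      · rintro ⟨⟨h1, _⟩, h3⟩; exact ⟨h1, h3⟩
      · rintro ⟨h1, h2⟩; exact ⟨⟨h1, h2 ▸ hc⟩, h2⟩
    rw [hfib, card_powersetCard, hGc]
  have hdisj : ∀ a ∈ A, ∀ b ∈ B, a ≠ b := fun a ha b hb h =>
    (Finset.disjoint_left.1 hAB ha) (h ▸ hb)
  by_cases hcase : ∃ a ∈ A, G.powersetCard a ⊆ 𝒵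
  · -- Case 1: 𝒵 contains a full level; then N = 𝒝f
    obtain ⟨a, haA, hsub⟩ := hcase
    have hNeq : N = 𝒝f := by
      rw [hNdef]
      apply filter_true_of_mem
      intro T hT
      obtain ⟨hTG, hTB⟩ := mem_filter.1 hT
      rw [mem_powerset] at hTG
      have hab : a ≠ T.card := hdisj a haA T.card hTB
      rcases Nat.lt_or_ge a T.card with h | h
      · obtain ⟨S, hST, hSc⟩ := exists_subset_card_eq (le_of_lt h)
        exact ⟨S, hsub (mem_powersetCard.2 ⟨hST.trans hTG, hSc⟩), Or.inl hST⟩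
      · have h' : T.card < a := lt_of_le_of_ne h (Ne.symm hab)
        obtain ⟨S, hTS, hSG, hSc⟩ := exists_subsuperset_card_eq hTG
          (le_of_lt h') (hGc ▸ hAle a haA)
        exact ⟨S, hsub (mem_powersetCard.2 ⟨hSG, hSc⟩), Or.inr hTS⟩
    have h1 : 𝒵.card < 𝒜f.card :=
      card_lt_card (lt_of_le_of_ne h𝒵 hprop)
    have h2 : N.card = 𝒝f.card := by rw [hNeq]
    have h3 : 𝒜f.card = 𝒝f.card := by
      rw [h𝒜def, h𝒝def, fam_card A, fam_card B, hid]
    omega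
  · -- Case 2: no full level
    push_neg at hcase
    set z : ℕ → ℕ := fun a => (𝒵.filter (fun S => S.card = a)).card with hzdef
    have hXsub : ∀ a, 𝒵.filter (fun S => S.card = a) ⊆ G.powersetCard a := by
      intro a S hS
      obtain ⟨hS𝒵, hSc⟩ := mem_filter.1 hS
      exact mem_powersetCard.2 ⟨mem_powerset.1 (mem_filter.1 (h𝒵 hS𝒵)).1, hSc⟩
    have hXneq : ∀ a ∈ A, 𝒵.filter (fun S => S.card = a) ≠ G.powersetCard a := by
      intro a ha h
      exact hcase a ha (h ▸ filter_subset _ _)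
    obtain ⟨a0, ha0A, ha0max⟩ :=
      exists_max_image A (fun a => (z a : ℚ) / (n.choose a)) hAne
    have hC0pos : 0 < n.choose a0 := Nat.choose_pos (hAle a0 ha0A)
    have hcross : ∀ a ∈ A, z a * n.choose a0 ≤ z a0 * n.choose a := by
      intro a ha
      have h1 := ha0max a ha
      have hpa : (0:ℚ) < (n.choose a : ℚ) := by
        exact_mod_cast Nat.choose_pos (hAle a ha)
      have hpa0 : (0:ℚ) < (n.choose a0 : ℚ) := by exact_mod_cast hC0pos
      rw [div_le_div_iff₀ hpa hpa0] at h1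
      exact_mod_cast h1
    have hz0pos : 0 < z a0 := by
      have hz1 : 0 < z S₀.card := card_pos.2 ⟨S₀, mem_filter.2 ⟨hS₀, rfl⟩⟩
      have := hcross S₀.card hS₀A
      rcases Nat.eq_zero_or_pos (z a0) with h | h
      · rw [h, zero_mul, Nat.le_zero] at this
        rcases Nat.mul_eq_zero.1 this with h' | h' <;> omega
      · exact h
    -- per-level strict inequality
    have hNfib : N.card = ∑ b ∈ B, (N.filter (fun T => T.card = b)).card :=
      card_eq_sum_card_fiberwise (fun T hT => (mem_filter.1 (mem_filter.1 hT).1).2)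
    have hperb : ∀ b ∈ B,
        z a0 * n.choose b < (N.filter (fun T => T.card = b)).card * n.choose a0 := by
      intro b hb
      have hk := key_lemma n a0 b (hAle a0 ha0A) (hBle b hb) (hdisj a0 ha0A b hb)
        (𝒵.filter (fun S => S.card = a0)) (hXsub a0) (card_pos.1 hz0pos) (hXneq a0 ha0A)
      refine lt_of_lt_of_le hk (Nat.mul_le_mul_right _ (card_le_card ?_))
      intro T hT
      obtain ⟨hTlev, S, hSX, hSr⟩ := mem_filter.1 hT
      obtain ⟨hTG, hTc⟩ := mem_powersetCard.1 hTlev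
      refine mem_filter.2 ⟨mem_filter.2 ⟨mem_filter.2 ⟨mem_powerset.2 hTG, hTc ▸ hb⟩,
        S, (mem_filter.1 hSX).1, hSr⟩, hTc⟩
    have hsumlt : z a0 * ∑ b ∈ B, n.choose b < N.card * n.choose a0 := by
      calc z a0 * ∑ b ∈ B, n.choose b = ∑ b ∈ B, z a0 * n.choose b := mul_sum _ _ _
      _ < ∑ b ∈ B, (N.filter (fun T => T.card = b)).card * n.choose a0 :=
          sum_lt_sum_of_nonempty hBne hperb
      _ = (∑ b ∈ B, (N.filter (fun T => T.card = b)).card) * n.choose a0 :=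
          (sum_mul _ _ _).symm
      _ = N.card * n.choose a0 := by rw [← hNfib]
    have h𝒵fib : 𝒵.card = ∑ a ∈ A, z a :=
      card_eq_sum_card_fiberwise (fun S hS => (mem_filter.1 (h𝒵 hS)).2)
    have hfinal : 𝒵.card * n.choose a0 < N.card * n.choose a0 := by
      calc 𝒵.card * n.choose a0 = ∑ a ∈ A, z a * n.choose a0 := by
            rw [h𝒵fib, sum_mul]
      _ ≤ ∑ a ∈ A, z a0 * n.choose a := sum_le_sum hcross
      _ = z a0 * ∑ a ∈ A, n.choose a := (mul_sum _ _ _).symm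
      _ = z a0 * ∑ b ∈ B, n.choose b := by rw [hid]
      _ < N.card * n.choose a0 := hsumlt
    have := Nat.lt_of_mul_lt_mul_right hfinal
    omega
end

section
/- Let n be a natural number, and let a_1 < … < a_k and b_1 < … < b_m be indices in {0,1,…,n} with a_i ≠ b_j for all i, j, such that C(n,a_1) + … + C(n,a_k) ≤ C(n,b_1) + … + C(n,b_m). Set Σ := {S ⊆ [n] : |S| ∈ {a_1,…,a_k}} and Λ := {T ⊆ [n] : |T| ∈ {b_1,…,b_m}}. Then there exists an injection Φ : Σ → Λ such that for every S ∈ Σ we have S ⊆ Φ(S) or Φ(S) ⊆ S. -/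
open Finset FinsetFamily

variable {α : Type*} [DecidableEq α] [Fintype α]

lemma iter_shadow_lym {𝒜 : Finset (Finset α)} {r k : ℕ}
    (h : (𝒜 : Set (Finset α)).Sized r) (hk : k ≤ r) (hr : r ≤ Fintype.card α) :
    𝒜.card * (Fintype.card α).choose (r - k) ≤ (∂^[k] 𝒜).card * (Fintype.card α).choose r := by
  induction k with
  | zero => simp
  | succ k ih =>
    set N := Fintype.card α
    have hk' : k ≤ r := le_of_lt (Nat.lt_of_succ_le hk)
    have ih' := ih hk'
    have hsized : ((∂^[k] 𝒜 : Finset (Finset α)) : Set (Finset α)).Sized (r - k) :=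
      h.shadow_iterate
    have lym := Finset.card_mul_le_card_shadow_mul hsized
    rw [Function.iterate_succ_apply']
    set j := r - k with hj
    have hj1 : 1 ≤ j := by omega
    have hjN : j ≤ N := by omega
    have hrk1 : r - (k+1) = j - 1 := by omega
    -- key identity: C(N,j) * j = C(N, j-1) * (N - j + 1)
    have key : N.choose j * j = N.choose (j-1) * (N - j + 1) := by
      obtain ⟨m, hm⟩ : ∃ m, j = m + 1 := ⟨j - 1, by omega⟩
      rw [hm, Nat.choose_succ_right_eq]
      simp only [Nat.add_sub_cancel]
      congr 1
      omega
    have h1 : 𝒜.card * N.choose (j-1) * (N - j + 1) ≤ (∂ (∂^[k] 𝒜)).card * N.choose r * (N - j + 1) := by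
      calc 𝒜.card * N.choose (j-1) * (N - j + 1) = 𝒜.card * (N.choose j * j) := by
              rw [key]; ring
        _ = (𝒜.card * N.choose j) * j := by ring
        _ ≤ ((∂^[k] 𝒜).card * N.choose r) * j := Nat.mul_le_mul_right _ ih'
        _ = ((∂^[k] 𝒜).card * j) * N.choose r := by ring
        _ ≤ ((∂ (∂^[k] 𝒜)).card * (N - j + 1)) * N.choose r := Nat.mul_le_mul_right _ lym
        _ = (∂ (∂^[k] 𝒜)).card * N.choose r * (N - j + 1) := by ring
    rw [hrk1]
    exact Nat.le_of_mul_le_mul_right h1 (by omega)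

lemma iter_upShadow_compls (𝒜 : Finset (Finset α)) (k : ℕ) :
    ∂^[k] 𝒜ᶜˢ = (∂⁺^[k] 𝒜)ᶜˢ := by
  induction k with
  | zero => simp
  | succ k ih => rw [Function.iterate_succ_apply', Function.iterate_succ_apply', ih,
      Finset.shadow_compls]

lemma iter_upShadow_lym {𝒜 : Finset (Finset α)} {r k : ℕ}
    (h : (𝒜 : Set (Finset α)).Sized r) (hk : r + k ≤ Fintype.card α) :
    𝒜.card * (Fintype.card α).choose (r + k) ≤ (∂⁺^[k] 𝒜).card * (Fintype.card α).choose r := by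
  set N := Fintype.card α
  have hc : ((𝒜ᶜˢ : Finset (Finset α)) : Set (Finset α)).Sized (N - r) := by
    intro s hs
    simp only [Finset.coe_compls, Set.mem_image] at hs
    obtain ⟨t, ht, rfl⟩ := hs
    rw [Finset.card_compl, h ht]
  have hrN : r ≤ N := by omega
  have := iter_shadow_lym hc (k := k) (by omega) (by omega)
  rw [iter_upShadow_compls, Finset.card_compls, Finset.card_compls] at this
  have e1 : N - r - k = N - (r + k) := by omega
  rw [e1, Nat.choose_symm (by omega), Nat.choose_symm hrN] at this
  exact this

theorem abstract_injection (A B : Finset ℕ)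
    (hA : A ⊆ Finset.range (Fintype.card α + 1)) (hB : B ⊆ Finset.range (Fintype.card α + 1))
    (hle : ∑ a ∈ A, (Fintype.card α).choose a ≤ ∑ b ∈ B, (Fintype.card α).choose b) :
    ∃ f : {S : Finset α // S.card ∈ A} → Finset α,
      Function.Injective f ∧ ∀ x, (f x).card ∈ B ∧ (x.1 ⊆ f x ∨ f x ⊆ x.1) := by
  set N := Fintype.card α with hN
  set t : {S : Finset α // S.card ∈ A} → Finset (Finset α) :=
    fun S => Finset.univ.filter (fun T => T.card ∈ B ∧ (S.1 ⊆ T ∨ T ⊆ S.1)) with ht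
  have hall : ∀ G : Finset {S : Finset α // S.card ∈ A}, G.card ≤ (G.biUnion t).card := by
    intro G
    rcases G.eq_empty_or_nonempty with rfl | hG
    · simp
    set 𝒢 := G.image Subtype.val with h𝒢
    have h𝒢card : 𝒢.card = G.card := Finset.card_image_of_injective _ Subtype.val_injective
    set 𝒩 := G.biUnion t with h𝒩
    have h𝒢mem : ∀ S ∈ 𝒢, S.card ∈ A := by
      intro S hS
      obtain ⟨x, _, rfl⟩ := Finset.mem_image.1 hS
      exact x.2
    have h𝒩mem : ∀ T ∈ 𝒩, T.card ∈ B := by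
      intro T hT
      obtain ⟨x, _, hTx⟩ := Finset.mem_biUnion.1 hT
      exact (Finset.mem_filter.1 hTx).2.1
    have h𝒢sum : 𝒢.card = ∑ a ∈ A, (𝒢.filter (fun S => S.card = a)).card :=
      Finset.card_eq_sum_card_fiberwise h𝒢mem
    have h𝒩sum : 𝒩.card = ∑ b ∈ B, (𝒩.filter (fun T => T.card = b)).card :=
      Finset.card_eq_sum_card_fiberwise h𝒩mem
    have hAne : A.Nonempty := by
      obtain ⟨x, _⟩ := hG
      exact ⟨x.1.card, x.2⟩
    obtain ⟨a0, ha0A, ha0max⟩ := Finset.exists_max_image A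
      (fun a => ((𝒢.filter (fun S => S.card = a)).card : ℚ) / (N.choose a)) hAne
    have haN : ∀ a ∈ A, a ≤ N := fun a ha => by
      have := hA ha; rw [Finset.mem_range] at this; omega
    have hbN : ∀ b ∈ B, b ≤ N := fun b hb => by
      have := hB hb; rw [Finset.mem_range] at this; omega
    have ha0N : a0 ≤ N := haN a0 ha0A
    have hcpos : ∀ a, a ≤ N → 0 < N.choose a := fun a ha => Nat.choose_pos ha
    -- cross-multiplied maximality
    have hmax : ∀ a ∈ A, (𝒢.filter (fun S => S.card = a)).card * N.choose a0 ≤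
        (𝒢.filter (fun S => S.card = a0)).card * N.choose a := by
      intro a ha
      have h1 := ha0max a ha
      have hca : (0:ℚ) < N.choose a := by exact_mod_cast hcpos a (haN a ha)
      have hca0 : (0:ℚ) < N.choose a0 := by exact_mod_cast hcpos a0 ha0N
      rw [div_le_div_iff₀ hca hca0] at h1
      exact_mod_cast h1
    -- key claim
    have hkey : ∀ b ∈ B, (𝒢.filter (fun S => S.card = a0)).card * N.choose b ≤
        (𝒩.filter (fun T => T.card = b)).card * N.choose a0 := by
      intro b hb
      set 𝒜0 := 𝒢.filter (fun S => S.card = a0) with h𝒜0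
      have hsized : ((𝒜0 : Finset (Finset α)) : Set (Finset α)).Sized a0 := by
        intro s hs
        exact (Finset.mem_filter.1 hs).2
      have hbN' : b ≤ N := hbN b hb
      rcases le_total b a0 with hba | hab
      · -- shadow case
        have hlym := iter_shadow_lym hsized (k := a0 - b) (by omega) ha0N
        have heq : a0 - (a0 - b) = b := by omega
        rw [heq] at hlym
        have hsub : (∂^[a0 - b] 𝒜0) ⊆ 𝒩.filter (fun T => T.card = b) := by
          intro T hT
          have hTcard : T.card = b := by
            have := hsized.shadow_iterate (k := a0 - b) hT
            omega
          obtain ⟨S, hS𝒜, hTS, -⟩ := Finset.mem_shadow_iterate_iff_exists_sdiff.1 hT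
          obtain ⟨x, hxG, rfl⟩ := Finset.mem_image.1 (Finset.mem_filter.1 hS𝒜).1
          refine Finset.mem_filter.2 ⟨Finset.mem_biUnion.2 ⟨x, hxG, ?_⟩, hTcard⟩
          exact Finset.mem_filter.2 ⟨Finset.mem_univ _, by rw [hTcard]; exact hb, Or.inr hTS⟩
        calc 𝒜0.card * N.choose b ≤ (∂^[a0 - b] 𝒜0).card * N.choose a0 := hlym
          _ ≤ (𝒩.filter (fun T => T.card = b)).card * N.choose a0 :=
              Nat.mul_le_mul_right _ (Finset.card_le_card hsub)
      · -- upShadow case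
        have hlym := iter_upShadow_lym hsized (k := b - a0) (by omega)
        have heq : a0 + (b - a0) = b := by omega
        rw [heq] at hlym
        have hsub : (∂⁺^[b - a0] 𝒜0) ⊆ 𝒩.filter (fun T => T.card = b) := by
          intro T hT
          obtain ⟨S, hS𝒜, hST, hcd⟩ := Finset.mem_upShadow_iterate_iff_exists_sdiff.1 hT
          have hScard : S.card = a0 := (Finset.mem_filter.1 hS𝒜).2
          have hTcard : T.card = b := by
            have := Finset.card_sdiff_of_subset hST
            have hle2 := Finset.card_le_card hST
            omega
          obtain ⟨x, hxG, rfl⟩ := Finset.mem_image.1 (Finset.mem_filter.1 hS𝒜).1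
          refine Finset.mem_filter.2 ⟨Finset.mem_biUnion.2 ⟨x, hxG, ?_⟩, hTcard⟩
          exact Finset.mem_filter.2 ⟨Finset.mem_univ _, by rw [hTcard]; exact hb, Or.inl hST⟩
        calc 𝒜0.card * N.choose b ≤ (∂⁺^[b - a0] 𝒜0).card * N.choose a0 := hlym
          _ ≤ (𝒩.filter (fun T => T.card = b)).card * N.choose a0 :=
              Nat.mul_le_mul_right _ (Finset.card_le_card hsub)
    -- final chain
    have hchain : G.card * N.choose a0 ≤ 𝒩.card * N.choose a0 := by
      calc G.card * N.choose a0 = 𝒢.card * N.choose a0 := by rw [h𝒢card]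
        _ = ∑ a ∈ A, (𝒢.filter (fun S => S.card = a)).card * N.choose a0 := by
            rw [h𝒢sum, Finset.sum_mul]
        _ ≤ ∑ a ∈ A, (𝒢.filter (fun S => S.card = a0)).card * N.choose a :=
            Finset.sum_le_sum hmax
        _ = (𝒢.filter (fun S => S.card = a0)).card * ∑ a ∈ A, N.choose a := by
            rw [Finset.mul_sum]
        _ ≤ (𝒢.filter (fun S => S.card = a0)).card * ∑ b ∈ B, N.choose b :=
            Nat.mul_le_mul_left _ hle
        _ = ∑ b ∈ B, (𝒢.filter (fun S => S.card = a0)).card * N.choose b := by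
            rw [Finset.mul_sum]
        _ ≤ ∑ b ∈ B, (𝒩.filter (fun T => T.card = b)).card * N.choose a0 :=
            Finset.sum_le_sum hkey
        _ = 𝒩.card * N.choose a0 := by rw [h𝒩sum, Finset.sum_mul]
    exact Nat.le_of_mul_le_mul_right hchain (hcpos a0 ha0N)
  obtain ⟨f, hfinj, hft⟩ := (Finset.all_card_le_biUnion_card_iff_exists_injective t).1 hall
  refine ⟨f, hfinj, fun x => ?_⟩
  have := Finset.mem_filter.1 (hft x)
  exact this.2


/-- If `A, B ⊆ {0,…,n}` are disjoint index sets with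
`∑_{a∈A} C(n,a) ≤ ∑_{b∈B} C(n,b)`, then, setting `Σ = {S ⊆ [n] : |S| ∈ A}` and
`Λ = {T ⊆ [n] : |T| ∈ B}`, there exists an injection `Φ : Σ → Λ` such that every
`S ∈ Σ` is comparable with `Φ(S)` under inclusion. -/
theorem binomial_inequality_injection (n : ℕ) (A B : Finset ℕ)
    (hA : A ⊆ Finset.range (n + 1)) (hB : B ⊆ Finset.range (n + 1))
    (hAB : Disjoint A B)
    (hle : ∑ a ∈ A, n.choose a ≤ ∑ b ∈ B, n.choose b) :
    ∃ Φ : Finset ℕ → Finset ℕ,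
      Set.InjOn Φ {S : Finset ℕ | S ⊆ Finset.Icc 1 n ∧ S.card ∈ A} ∧
      Set.MapsTo Φ {S : Finset ℕ | S ⊆ Finset.Icc 1 n ∧ S.card ∈ A}
        {T : Finset ℕ | T ⊆ Finset.Icc 1 n ∧ T.card ∈ B} ∧
      ∀ S : Finset ℕ, S ⊆ Finset.Icc 1 n → S.card ∈ A →
        (S ⊆ Φ S ∨ Φ S ⊆ S) := by
  classical
  set α := {x : ℕ // x ∈ Finset.Icc 1 n} with hα
  have hcardα : Fintype.card α = n := by
    rw [Fintype.card_coe, Nat.card_Icc]; omega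
  -- up and down maps
  set up : Finset α → Finset ℕ := fun S => S.map (Function.Embedding.subtype _) with hup
  set down : Finset ℕ → Finset α := fun S => S.subtype _ with hdown
  have hupdown : ∀ S : Finset ℕ, S ⊆ Finset.Icc 1 n → up (down S) = S := by
    intro S hS
    simp only [hup, hdown, Finset.subtype_map]
    exact Finset.filter_true_of_mem fun x hx => hS hx
  have hupcard : ∀ S : Finset α, (up S).card = S.card := fun S => Finset.card_map _
  have hupsub : ∀ S : Finset α, up S ⊆ Finset.Icc 1 n := by
    intro S x hx
    simp only [hup, Finset.mem_map, Function.Embedding.coe_subtype] at hx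
    obtain ⟨⟨y, hy⟩, -, rfl⟩ := hx
    exact hy
  have hupinj : Function.Injective up := fun S T h =>
    Finset.map_injective _ h
  have hupmono : ∀ S T : Finset α, S ⊆ T → up S ⊆ up T := fun S T h =>
    Finset.map_subset_map.2 h
  -- apply abstract theorem
  rw [← hcardα] at hA hB hle
  obtain ⟨f, hfinj, hf⟩ := abstract_injection (α := α) A B hA hB hle
  have hdcard : ∀ S : Finset ℕ, S ⊆ Finset.Icc 1 n → S.card ∈ A → (down S).card ∈ A := by
    intro S hS hScard
    have : (down S).card = S.card := by
      rw [← hupcard (down S), hupdown S hS]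
    rwa [this]
  set Φ : Finset ℕ → Finset ℕ := fun S =>
    if h : S ⊆ Finset.Icc 1 n ∧ S.card ∈ A then up (f ⟨down S, hdcard S h.1 h.2⟩) else ∅
    with hΦ
  have hΦeq : ∀ S (h1 : S ⊆ Finset.Icc 1 n) (h2 : S.card ∈ A),
      Φ S = up (f ⟨down S, hdcard S h1 h2⟩) := by
    intro S h1 h2
    simp only [hΦ, dif_pos (⟨h1, h2⟩ : S ⊆ Finset.Icc 1 n ∧ S.card ∈ A)]
  refine ⟨Φ, ?_, ?_, ?_⟩
  · intro S hS T hT hST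
    simp only [Set.mem_setOf_eq] at hS hT
    rw [hΦeq S hS.1 hS.2, hΦeq T hT.1 hT.2] at hST
    have := hfinj (hupinj hST)
    have hd : down S = down T := congrArg Subtype.val this
    rw [← hupdown S hS.1, ← hupdown T hT.1, hd]
  · intro S hS
    simp only [Set.mem_setOf_eq] at hS ⊢
    rw [hΦeq S hS.1 hS.2]
    exact ⟨hupsub _, by rw [hupcard]; exact (hf _).1⟩
  · intro S h1 h2
    rw [hΦeq S h1 h2]
    rcases (hf ⟨down S, hdcard S h1 h2⟩).2 with hc | hc
    · left
      have := hupmono _ _ hc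
      rwa [hupdown S h1] at this
    · right
      have := hupmono _ _ hc
      rwa [hupdown S h1] at this
end

section
/- Let n be a natural number and suppose there is a binomial identity C(n,0) + C(n,a_1) + … + C(n,a_k) = C(n,1) + C(n,b_1) + … + C(n,b_m) with 2 < a_1 < … < a_k < n, 1 < b_1 < … < b_m < n, and a_i ≠ b_j for all i, j. Set A := {0, a_1, …, a_k}, B := {1, b_1, …, b_m}, 𝒜 := {S ⊆ [n] : |S| ∈ A}, and 𝒝 := {T ⊆ [n] : |T| ∈ B}. Then there exists a bijection Φ : 𝒜 → 𝒝 such that Φ(∅) = {n} (the singleton containing the element n), and for every S ∈ 𝒜 we have S ⊆ Φ(S) or Φ(S) ⊆ S. -/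
open Finset

namespace BinomAnchorAux

/-- family of `m`-subsets of `Ω` contained in some member of `F` -/
def low (Ω : Finset ℕ) (m : ℕ) (F : Finset (Finset ℕ)) : Finset (Finset ℕ) :=
  (Ω.powersetCard m).filter fun T => ∃ S ∈ F, T ⊆ S

/-- family of `b`-subsets of `Ω` containing some member of `F` -/
def upp (Ω : Finset ℕ) (b : ℕ) (F : Finset (Finset ℕ)) : Finset (Finset ℕ) :=
  (Ω.powersetCard b).filter fun T => ∃ S ∈ F, S ⊆ T

variable {Ω : Finset ℕ} {F : Finset (Finset ℕ)} {m k l b j : ℕ}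

lemma mem_low {T : Finset ℕ} :
    T ∈ low Ω m F ↔ (T ⊆ Ω ∧ T.card = m) ∧ ∃ S ∈ F, T ⊆ S := by
  simp [low, mem_powersetCard]

lemma low_subset : low Ω m F ⊆ Ω.powersetCard m := filter_subset _ _

lemma step_le (hF : F ⊆ Ω.powersetCard (m+1)) :
    F.card * (m+1) ≤ (low Ω m F).card * (Ω.card - m) := by
  classical
  have hmem : ∀ S ∈ F, S ⊆ Ω ∧ S.card = m + 1 := fun S hS => mem_powersetCard.1 (hF hS)
  have key1 : ∀ S ∈ F, ((low Ω m F).filter fun T => T ⊆ S).card = m + 1 := by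
    intro S hS
    have : (low Ω m F).filter (fun T => T ⊆ S) = S.powersetCard m := by
      ext T
      simp only [mem_filter, mem_low, mem_powersetCard]
      constructor
      · rintro ⟨⟨⟨-, hc⟩, -⟩, hTS⟩; exact ⟨hTS, hc⟩
      · rintro ⟨hTS, hc⟩
        exact ⟨⟨⟨hTS.trans (hmem S hS).1, hc⟩, S, hS, hTS⟩, hTS⟩
    rw [this, card_powersetCard, (hmem S hS).2, Nat.choose_succ_self_right]
  have key2 : ∀ T ∈ low Ω m F, (F.filter fun S => T ⊆ S).card ≤ Ω.card - m := by
    intro T hT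
    obtain ⟨⟨hTΩ, hTc⟩, -⟩ := mem_low.1 hT
    have hsub : F.filter (fun S => T ⊆ S) ⊆ (Ω \ T).image (fun x => insert x T) := by
      intro S hS
      obtain ⟨hSF, hTS⟩ := mem_filter.1 hS
      have h1 : (S \ T).card = 1 := by
        rw [card_sdiff_of_subset hTS, (hmem S hSF).2, hTc]; omega
      obtain ⟨x, hx⟩ := card_eq_one.1 h1
      have hxS : x ∈ S \ T := by rw [hx]; exact mem_singleton_self x
      refine mem_image.2 ⟨x, ?_, ?_⟩
      · exact mem_sdiff.2 ⟨(hmem S hSF).1 (mem_sdiff.1 hxS).1, (mem_sdiff.1 hxS).2⟩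
      · have := union_sdiff_of_subset hTS
        rw [hx] at this
        rw [← this, union_comm, Finset.insert_eq]
    calc (F.filter fun S => T ⊆ S).card ≤ ((Ω \ T).image (fun x => insert x T)).card :=
          card_le_card hsub
      _ ≤ (Ω \ T).card := card_image_le
      _ = Ω.card - m := by rw [card_sdiff_of_subset hTΩ, hTc]
  have swap : ∑ T ∈ low Ω m F, (F.filter fun S => T ⊆ S).card
      = ∑ S ∈ F, ((low Ω m F).filter fun T => T ⊆ S).card := by
    simp_rw [card_filter]
    exact Finset.sum_comm
  calc F.card * (m+1) = ∑ S ∈ F, (m+1) := by rw [sum_const, smul_eq_mul]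
    _ = ∑ S ∈ F, ((low Ω m F).filter fun T => T ⊆ S).card := by
        exact (Finset.sum_congr rfl key1).symm
    _ = ∑ T ∈ low Ω m F, (F.filter fun S => T ⊆ S).card := swap.symm
    _ ≤ ∑ T ∈ low Ω m F, (Ω.card - m) := Finset.sum_le_sum key2
    _ = (low Ω m F).card * (Ω.card - m) := by rw [sum_const, smul_eq_mul]

lemma closure (hF : F ⊆ Ω.powersetCard (m+1))
    (hcl : ∀ T ∈ low Ω m F, ∀ x ∈ Ω \ T, insert x T ∈ F)
    {S₀ : Finset ℕ} (hS₀ : S₀ ∈ F) : Ω.powersetCard (m+1) ⊆ F := by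
  classical
  have main : ∀ j (S₀ : Finset ℕ), S₀ ∈ F → ∀ S ∈ Ω.powersetCard (m+1),
      (S \ S₀).card = j → S ∈ F := by
    intro j
    induction j with
    | zero =>
      intro S₀ hS₀ S hS hj
      have hsub : S ⊆ S₀ := sdiff_eq_empty_iff_subset.1 (card_eq_zero.1 hj)
      have hc : S₀.card ≤ S.card := by
        rw [(mem_powersetCard.1 hS).2, (mem_powersetCard.1 (hF hS₀)).2]
      rwa [eq_of_subset_of_card_le hsub hc]
    | succ j ih =>
      intro S₀ hS₀ S hS hj
      obtain ⟨hSΩ, hSc⟩ := mem_powersetCard.1 hS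
      obtain ⟨hS₀Ω, hS₀c⟩ := mem_powersetCard.1 (hF hS₀)
      have hy : (S \ S₀).Nonempty := by rw [← card_pos, hj]; omega
      obtain ⟨y, hy⟩ := hy
      have hx : (S₀ \ S).Nonempty := by
        rw [← card_pos, card_sdiff_comm (by rw [hS₀c, hSc]), hj]; omega
      obtain ⟨x, hx⟩ := hx
      obtain ⟨hyS, hyS₀⟩ := mem_sdiff.1 hy
      obtain ⟨hxS₀, hxS⟩ := mem_sdiff.1 hx
      set T := S₀.erase x with hT
      have hTlow : T ∈ low Ω m F := by
        rw [mem_low]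
        exact ⟨⟨(erase_subset _ _).trans hS₀Ω, by rw [card_erase_of_mem hxS₀, hS₀c]; omega⟩,
          S₀, hS₀, erase_subset _ _⟩
      have hyT : y ∈ Ω \ T := by
        refine mem_sdiff.2 ⟨hSΩ hyS, fun h => hyS₀ ((erase_subset _ _) h)⟩
      have hS₁ : insert y T ∈ F := hcl T hTlow y hyT
      refine ih (insert y T) hS₁ S hS ?_
      have heq : S \ insert y T = (S \ S₀).erase y := by
        ext z
        simp only [hT, mem_sdiff, mem_insert, mem_erase]
        constructor
        · rintro ⟨hzS, hz⟩
          push_neg at hz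
          refine ⟨hz.1, hzS, fun hzS₀ => ?_⟩
          rcases eq_or_ne z x with rfl | hzx
          · exact hxS hzS
          · exact hz.2 hzx hzS₀
        · rintro ⟨hzy, hzS, hzS₀⟩
          refine ⟨hzS, ?_⟩
          push_neg
          exact ⟨hzy, fun _ h => hzS₀ h⟩
      rw [heq, card_erase_of_mem hy, hj]
      omega
  intro S hS
  exact main _ S₀ hS₀ S hS rfl

lemma step_lt (hF : F ⊆ Ω.powersetCard (m+1)) (hne : F.Nonempty)
    (hprop : F ≠ Ω.powersetCard (m+1)) (hm : m + 1 ≤ Ω.card) :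
    F.card * (m+1) < (low Ω m F).card * (Ω.card - m) := by
  classical
  obtain ⟨S₀, hS₀⟩ := hne
  have hmem : ∀ S ∈ F, S ⊆ Ω ∧ S.card = m + 1 := fun S hS => mem_powersetCard.1 (hF hS)
  -- find a witness of non-closure
  have hw : ∃ T ∈ low Ω m F, ∃ x ∈ Ω \ T, insert x T ∉ F := by
    by_contra h
    push_neg at h
    exact hprop (Subset.antisymm hF (closure hF h hS₀))
  obtain ⟨T₀, hT₀, x₀, hx₀, hx₀F⟩ := hw
  obtain ⟨⟨hT₀Ω, hT₀c⟩, -⟩ := mem_low.1 hT₀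
  -- as in step_le but with a strict bound at T₀
  have key1 : ∀ S ∈ F, ((low Ω m F).filter fun T => T ⊆ S).card = m + 1 := by
    intro S hS
    have : (low Ω m F).filter (fun T => T ⊆ S) = S.powersetCard m := by
      ext T
      simp only [mem_filter, mem_low, mem_powersetCard]
      constructor
      · rintro ⟨⟨⟨-, hc⟩, -⟩, hTS⟩; exact ⟨hTS, hc⟩
      · rintro ⟨hTS, hc⟩
        exact ⟨⟨⟨hTS.trans (hmem S hS).1, hc⟩, S, hS, hTS⟩, hTS⟩
    rw [this, card_powersetCard, (hmem S hS).2, Nat.choose_succ_self_right]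
  have key2 : ∀ T ∈ low Ω m F, (F.filter fun S => T ⊆ S).card ≤ Ω.card - m := by
    intro T hT
    obtain ⟨⟨hTΩ, hTc⟩, -⟩ := mem_low.1 hT
    have hsub : F.filter (fun S => T ⊆ S) ⊆ (Ω \ T).image (fun x => insert x T) := by
      intro S hS
      obtain ⟨hSF, hTS⟩ := mem_filter.1 hS
      have h1 : (S \ T).card = 1 := by
        rw [card_sdiff_of_subset hTS, (hmem S hSF).2, hTc]; omega
      obtain ⟨x, hx⟩ := card_eq_one.1 h1
      have hxS : x ∈ S \ T := by rw [hx]; exact mem_singleton_self x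
      refine mem_image.2 ⟨x, ?_, ?_⟩
      · exact mem_sdiff.2 ⟨(hmem S hSF).1 (mem_sdiff.1 hxS).1, (mem_sdiff.1 hxS).2⟩
      · have := union_sdiff_of_subset hTS
        rw [hx] at this
        rw [← this, union_comm, Finset.insert_eq]
    calc (F.filter fun S => T ⊆ S).card ≤ ((Ω \ T).image (fun x => insert x T)).card :=
          card_le_card hsub
      _ ≤ (Ω \ T).card := card_image_le
      _ = Ω.card - m := by rw [card_sdiff_of_subset hTΩ, hTc]
  have key2' : (F.filter fun S => T₀ ⊆ S).card < Ω.card - m := by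
    have hsub : F.filter (fun S => T₀ ⊆ S) ⊆ ((Ω \ T₀).erase x₀).image (fun x => insert x T₀) := by
      intro S hS
      obtain ⟨hSF, hTS⟩ := mem_filter.1 hS
      have h1 : (S \ T₀).card = 1 := by
        rw [card_sdiff_of_subset hTS, (hmem S hSF).2, hT₀c]; omega
      obtain ⟨x, hx⟩ := card_eq_one.1 h1
      have hxS : x ∈ S \ T₀ := by rw [hx]; exact mem_singleton_self x
      have hSeq : S = insert x T₀ := by
        have := union_sdiff_of_subset hTS
        rw [hx] at this
        rw [← this, union_comm, Finset.insert_eq]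
      refine mem_image.2 ⟨x, mem_erase.2 ⟨?_, ?_⟩, hSeq.symm⟩
      · rintro rfl; exact hx₀F (hSeq ▸ hSF)
      · exact mem_sdiff.2 ⟨(hmem S hSF).1 (mem_sdiff.1 hxS).1, (mem_sdiff.1 hxS).2⟩
    calc (F.filter fun S => T₀ ⊆ S).card
        ≤ (((Ω \ T₀).erase x₀).image (fun x => insert x T₀)).card := card_le_card hsub
      _ ≤ ((Ω \ T₀).erase x₀).card := card_image_le
      _ = (Ω \ T₀).card - 1 := card_erase_of_mem hx₀
      _ < Ω.card - m := by
          rw [card_sdiff_of_subset hT₀Ω, hT₀c]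
          have : x₀ ∈ Ω \ T₀ := hx₀
          have hpos : 0 < (Ω \ T₀).card := card_pos.2 ⟨x₀, hx₀⟩
          rw [card_sdiff_of_subset hT₀Ω, hT₀c] at hpos
          omega
  have swap : ∑ T ∈ low Ω m F, (F.filter fun S => T ⊆ S).card
      = ∑ S ∈ F, ((low Ω m F).filter fun T => T ⊆ S).card := by
    simp_rw [card_filter]
    exact Finset.sum_comm
  calc F.card * (m+1) = ∑ S ∈ F, (m+1) := by rw [sum_const, smul_eq_mul]
    _ = ∑ S ∈ F, ((low Ω m F).filter fun T => T ⊆ S).card :=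
        (Finset.sum_congr rfl key1).symm
    _ = ∑ T ∈ low Ω m F, (F.filter fun S => T ⊆ S).card := swap.symm
    _ < ∑ T ∈ low Ω m F, (Ω.card - m) := by
        refine Finset.sum_lt_sum (fun T hT => key2 T hT) ⟨T₀, hT₀, key2'⟩
    _ = (low Ω m F).card * (Ω.card - m) := by rw [sum_const, smul_eq_mul]

lemma low_self (hF : F ⊆ Ω.powersetCard k) : low Ω k F = F := by
  ext T
  rw [mem_low]
  constructor
  · rintro ⟨⟨-, hTc⟩, S, hS, hTS⟩
    have hc : S.card ≤ T.card := by
      rw [hTc, (mem_powersetCard.1 (hF hS)).2]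
    rwa [eq_of_subset_of_card_le hTS hc]
  · intro hT
    obtain ⟨h1, h2⟩ := mem_powersetCard.1 (hF hT)
    exact ⟨⟨h1, h2⟩, T, hT, Subset.refl T⟩

lemma low_low (hF : F ⊆ Ω.powersetCard k) (hml : m ≤ l) (hlk : l ≤ k) :
    low Ω m (low Ω l F) = low Ω m F := by
  ext T
  simp only [mem_low]
  constructor
  · rintro ⟨hT, S', ⟨-, S, hS, hS'S⟩, hTS'⟩
    exact ⟨hT, S, hS, hTS'.trans hS'S⟩
  · rintro ⟨⟨hTΩ, hTc⟩, S, hS, hTS⟩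
    obtain ⟨hSΩ, hSc⟩ := mem_powersetCard.1 (hF hS)
    obtain ⟨u, hTu, huS, huc⟩ :=
      exists_subsuperset_card_eq (n := l) hTS (by omega) (by omega)
    exact ⟨⟨hTΩ, hTc⟩, u, ⟨⟨huS.trans hSΩ, huc⟩, S, hS, huS⟩, hTu⟩

lemma step_norm (hF : F ⊆ Ω.powersetCard (m+1)) (hm : m + 1 ≤ Ω.card) :
    F.card * Ω.card.choose m ≤ (low Ω m F).card * Ω.card.choose (m+1) := by
  have h := step_le hF
  have hid : Ω.card.choose (m+1) * (m+1) = Ω.card.choose m * (Ω.card - m) :=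
    Nat.choose_succ_right_eq _ _
  refine Nat.le_of_mul_le_mul_right ?_ (Nat.succ_pos m)
  calc F.card * Ω.card.choose m * (m+1) = F.card * (m+1) * Ω.card.choose m := by ring
    _ ≤ (low Ω m F).card * (Ω.card - m) * Ω.card.choose m := Nat.mul_le_mul_right _ h
    _ = (low Ω m F).card * (Ω.card.choose m * (Ω.card - m)) := by ring
    _ = (low Ω m F).card * (Ω.card.choose (m+1) * (m+1)) := by rw [← hid]
    _ = (low Ω m F).card * Ω.card.choose (m+1) * (m+1) := by ring

lemma step_norm_lt (hF : F ⊆ Ω.powersetCard (m+1)) (hne : F.Nonempty)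
    (hlt : F.card < Ω.card.choose (m+1)) (hm : m + 1 ≤ Ω.card) :
    F.card * Ω.card.choose m < (low Ω m F).card * Ω.card.choose (m+1) := by
  have hprop : F ≠ Ω.powersetCard (m+1) := by
    intro h
    rw [h, card_powersetCard] at hlt
    exact lt_irrefl _ hlt
  have h := step_lt hF hne hprop hm
  have hid : Ω.card.choose (m+1) * (m+1) = Ω.card.choose m * (Ω.card - m) :=
    Nat.choose_succ_right_eq _ _
  refine Nat.lt_of_mul_lt_mul_right (a := m+1) ?_
  calc F.card * Ω.card.choose m * (m+1) = F.card * (m+1) * Ω.card.choose m := by ring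
    _ < (low Ω m F).card * (Ω.card - m) * Ω.card.choose m := by
        have hpos : 0 < Ω.card.choose m := Nat.choose_pos (by omega)
        exact Nat.mul_lt_mul_of_lt_of_le h (le_refl _) hpos
    _ = (low Ω m F).card * (Ω.card.choose m * (Ω.card - m)) := by ring
    _ = (low Ω m F).card * (Ω.card.choose (m+1) * (m+1)) := by rw [← hid]
    _ = (low Ω m F).card * Ω.card.choose (m+1) * (m+1) := by ring

lemma iter (hk : k ≤ Ω.card) :
    ∀ j ≤ k, ∀ F, F ⊆ Ω.powersetCard k →
      F.card * Ω.card.choose (k - j) ≤ (low Ω (k - j) F).card * Ω.card.choose k := by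
  intro j
  induction j with
  | zero =>
    intro _ F hF
    rw [Nat.sub_zero, low_self hF]
  | succ j ih =>
    intro hjk F hF
    have hj : j ≤ k := by omega
    set l := k - j with hl
    have hl1 : 1 ≤ l := by omega
    have hm : k - (j+1) = l - 1 := by omega
    have hml : l - 1 + 1 = l := by omega
    set G := low Ω l F with hG
    have hGsub : G ⊆ Ω.powersetCard l := low_subset
    have h2 : F.card * Ω.card.choose l ≤ G.card * Ω.card.choose k := ih hj F hF
    have h1 : G.card * Ω.card.choose (l-1) ≤ (low Ω (l-1) G).card * Ω.card.choose l := by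
      have := step_norm (F := G) (m := l - 1) (Ω := Ω) (by rw [hml]; exact hGsub)
        (by omega)
      rwa [hml] at this
    have h3 : low Ω (l-1) G = low Ω (l-1) F := low_low hF (by omega) (by omega)
    rw [hm, ← h3]
    have hpos : 0 < Ω.card.choose l := Nat.choose_pos (by omega)
    refine Nat.le_of_mul_le_mul_right ?_ hpos
    calc F.card * Ω.card.choose (l-1) * Ω.card.choose l
        = F.card * Ω.card.choose l * Ω.card.choose (l-1) := by ring
      _ ≤ G.card * Ω.card.choose k * Ω.card.choose (l-1) := Nat.mul_le_mul_right _ h2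
      _ = G.card * Ω.card.choose (l-1) * Ω.card.choose k := by ring
      _ ≤ (low Ω (l-1) G).card * Ω.card.choose l * Ω.card.choose k :=
          Nat.mul_le_mul_right _ h1
      _ = (low Ω (l-1) G).card * Ω.card.choose k * Ω.card.choose l := by ring

lemma iter_strict (hk : k ≤ Ω.card) :
    ∀ j, 1 ≤ j → j ≤ k → ∀ F, F ⊆ Ω.powersetCard k → F.Nonempty →
      F.card < Ω.card.choose k →
      F.card * Ω.card.choose (k - j) < (low Ω (k - j) F).card * Ω.card.choose k := by
  intro j
  induction j with
  | zero => omega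
  | succ j ih =>
    intro _ hjk F hF hne hlt
    rcases Nat.eq_zero_or_pos j with rfl | hj1
    · -- single step
      have hk1 : k - 1 + 1 = k := by omega
      have := step_norm_lt (F := F) (m := k - 1) (Ω := Ω)
        (by rw [hk1]; exact hF) (hne) (by rw [hk1]; exact hlt) (by omega)
      rwa [hk1] at this
    · have hj : j ≤ k := by omega
      set l := k - j with hl
      have hl1 : 1 ≤ l := by omega
      have hm : k - (j+1) = l - 1 := by omega
      have hml : l - 1 + 1 = l := by omega
      set G := low Ω l F with hG
      have hGsub : G ⊆ Ω.powersetCard l := low_subset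
      have h2 : F.card * Ω.card.choose l < G.card * Ω.card.choose k := ih hj1 hj F hF hne hlt
      have h1 : G.card * Ω.card.choose (l-1) ≤ (low Ω (l-1) G).card * Ω.card.choose l := by
        have := step_norm (F := G) (m := l - 1) (Ω := Ω) (by rw [hml]; exact hGsub) (by omega)
        rwa [hml] at this
      have h3 : low Ω (l-1) G = low Ω (l-1) F := low_low hF (by omega) (by omega)
      rw [hm, ← h3]
      have hpos : 0 < Ω.card.choose l := Nat.choose_pos (by omega)
      have hpos' : 0 < Ω.card.choose (l-1) := Nat.choose_pos (by omega)
      refine Nat.lt_of_mul_lt_mul_right (a := Ω.card.choose l) ?_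
      calc F.card * Ω.card.choose (l-1) * Ω.card.choose l
          = F.card * Ω.card.choose l * Ω.card.choose (l-1) := by ring
        _ < G.card * Ω.card.choose k * Ω.card.choose (l-1) :=
            Nat.mul_lt_mul_of_lt_of_le h2 (le_refl _) hpos'
        _ = G.card * Ω.card.choose (l-1) * Ω.card.choose k := by ring
        _ ≤ (low Ω (l-1) G).card * Ω.card.choose l * Ω.card.choose k :=
            Nat.mul_le_mul_right _ h1
        _ = (low Ω (l-1) G).card * Ω.card.choose k * Ω.card.choose l := by ring

lemma upp_card_eq (hF : ∀ S ∈ F, S ⊆ Ω) (hb : b ≤ Ω.card) :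
    (upp Ω b F).card = (low Ω (Ω.card - b) (F.image (Ω \ ·))).card := by
  classical
  have himg : (upp Ω b F).image (Ω \ ·) = low Ω (Ω.card - b) (F.image (Ω \ ·)) := by
    ext T'
    simp only [mem_image, mem_low, upp, mem_filter, mem_powersetCard]
    constructor
    · rintro ⟨T, ⟨⟨hTΩ, hTc⟩, S, hS, hST⟩, rfl⟩
      refine ⟨⟨sdiff_subset, by rw [card_sdiff_of_subset hTΩ, hTc]⟩, Ω \ S, ⟨S, hS, rfl⟩, ?_⟩
      exact sdiff_subset_sdiff (Subset.refl Ω) hST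
    · rintro ⟨⟨hT'Ω, hT'c⟩, S', ⟨S, hS, rfl⟩, hT'S'⟩
      refine ⟨Ω \ T', ⟨⟨sdiff_subset, by rw [card_sdiff_of_subset hT'Ω, hT'c]; omega⟩, S, hS, ?_⟩, ?_⟩
      · rw [subset_sdiff]
        refine ⟨hF S hS, ?_⟩
        have : Disjoint T' S := by
          refine disjoint_left.2 fun z hz hzS => ?_
          exact (mem_sdiff.1 (hT'S' hz)).2 hzS
        exact this.symm
      · rw [Finset.sdiff_sdiff_eq_self hT'Ω]
  rw [← himg]
  refine (card_image_of_injOn ?_).symm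
  intro T hT T2 hT2 heq
  have h1 : T ⊆ Ω := (mem_powersetCard.1 (mem_filter.1 hT).1).1
  have h2 : T2 ⊆ Ω := (mem_powersetCard.1 (mem_filter.1 hT2).1).1
  have heq' : Ω \ T = Ω \ T2 := heq
  rw [← Finset.sdiff_sdiff_eq_self h1, ← Finset.sdiff_sdiff_eq_self h2, heq']

lemma upp_bound_strict (hF : F ⊆ Ω.powersetCard k) (hkb : k < b) (hb : b ≤ Ω.card)
    (hne : F.Nonempty) (hlt : F.card < Ω.card.choose k) :
    F.card * Ω.card.choose b < (upp Ω b F).card * Ω.card.choose k := by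
  classical
  have hkn : k ≤ Ω.card := le_of_lt (lt_of_lt_of_le hkb hb)
  have hmemF : ∀ S ∈ F, S ⊆ Ω := fun S hS => (mem_powersetCard.1 (hF hS)).1
  set F' := F.image (Ω \ ·) with hF'
  have hF'sub : F' ⊆ Ω.powersetCard (Ω.card - k) := by
    intro S' hS'
    obtain ⟨S, hS, rfl⟩ := mem_image.1 hS'
    obtain ⟨hSΩ, hSc⟩ := mem_powersetCard.1 (hF hS)
    exact mem_powersetCard.2 ⟨sdiff_subset, by rw [card_sdiff_of_subset hSΩ, hSc]⟩
  have hF'card : F'.card = F.card := by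
    refine card_image_of_injOn ?_
    intro T hT T2 hT2 heq
    have heq' : Ω \ T = Ω \ T2 := heq
    rw [← Finset.sdiff_sdiff_eq_self (hmemF T hT), ← Finset.sdiff_sdiff_eq_self (hmemF T2 hT2), heq']
  have hF'ne : F'.Nonempty := hne.image _
  have h := iter_strict (k := Ω.card - k) (Ω := Ω) (by omega) (b - k) (by omega) (by omega)
    F' hF'sub hF'ne (by rw [hF'card, Nat.choose_symm hkn]; exact hlt)
  have harith : Ω.card - k - (b - k) = Ω.card - b := by omega
  rw [harith] at h
  rw [← upp_card_eq hmemF hb] at h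
  rw [Nat.choose_symm hb, Nat.choose_symm hkn, hF'card] at h
  exact h

end BinomAnchorAux
/-- Given a binomial identity
`C(n,0) + ∑_{a ∈ A'} C(n,a) = C(n,1) + ∑_{b ∈ B'} C(n,b)` with `2 < a < n` for all
`a ∈ A'`, `1 < b < n` for all `b ∈ B'`, and `A'` disjoint from `B'`, then setting
`A = {0} ∪ A'`, `B = {1} ∪ B'`, `𝒜 = {S ⊆ [n] : |S| ∈ A}`, `𝒝 = {T ⊆ [n] : |T| ∈ B}`,
there exists a bijection `Φ : 𝒜 → 𝒝` with `Φ(∅) = {n}` and such that every `S ∈ 𝒜`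
is comparable with `Φ(S)` under inclusion. -/
theorem binomial_identity_orderable_with_anchor (n : ℕ) (A' B' : Finset ℕ)
    (hA' : ∀ a ∈ A', 2 < a ∧ a < n) (hB' : ∀ b ∈ B', 1 < b ∧ b < n)
    (hAB : Disjoint A' B')
    (hid : n.choose 0 + ∑ a ∈ A', n.choose a
         = n.choose 1 + ∑ b ∈ B', n.choose b) :
    ∃ Φ : Finset ℕ → Finset ℕ,
      Set.BijOn Φ
        {S : Finset ℕ | S ⊆ Finset.Icc 1 n ∧ S.card ∈ insert 0 A'}
        {T : Finset ℕ | T ⊆ Finset.Icc 1 n ∧ T.card ∈ insert 1 B'} ∧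
      Φ ∅ = {n} ∧
      ∀ S : Finset ℕ, S ⊆ Finset.Icc 1 n → S.card ∈ insert 0 A' →
        (S ⊆ Φ S ∨ Φ S ⊆ S) := by
  classical
  open Finset BinomAnchorAux in
  rcases Nat.eq_zero_or_pos n with rfl | hn
  · exfalso
    have hA : A' = ∅ := eq_empty_iff_forall_notMem.2 fun a ha => by have := hA' a ha; omega
    have hB : B' = ∅ := eq_empty_iff_forall_notMem.2 fun b hb => by have := hB' b hb; omega
    rw [hA, hB] at hid
    simp at hid
  set Ω := Finset.Icc 1 n with hΩdef
  have hΩcard : Ω.card = n := by rw [hΩdef, Nat.card_Icc]; omega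
  have h0A : 0 ∉ A' := fun h => by have := hA' 0 h; omega
  have h1B : (1:ℕ) ∉ B' := fun h => by have := hB' 1 h; omega
  set 𝒜F := (insert 0 A').biUnion (fun a => Ω.powersetCard a) with h𝒜F
  set 𝒝F := (insert 1 B').biUnion (fun b => Ω.powersetCard b) with h𝒝F
  have hmem𝒜 : ∀ S : Finset ℕ, S ∈ 𝒜F ↔ S ⊆ Ω ∧ S.card ∈ insert 0 A' := by
    intro S
    rw [h𝒜F]
    simp only [mem_biUnion, mem_powersetCard]
    constructor
    · rintro ⟨a, ha, hS, rfl⟩; exact ⟨hS, ha⟩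
    · rintro ⟨hS, ha⟩; exact ⟨S.card, ha, hS, rfl⟩
  have hmem𝒝 : ∀ T : Finset ℕ, T ∈ 𝒝F ↔ T ⊆ Ω ∧ T.card ∈ insert 1 B' := by
    intro T
    rw [h𝒝F]
    simp only [mem_biUnion, mem_powersetCard]
    constructor
    · rintro ⟨b, hb, hT, rfl⟩; exact ⟨hT, hb⟩
    · rintro ⟨hT, hb⟩; exact ⟨T.card, hb, hT, rfl⟩
  have hdisj : ∀ (C : Finset ℕ), ∀ x ∈ C, ∀ y ∈ C, x ≠ y →
      Disjoint (Ω.powersetCard x) (Ω.powersetCard y) := by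
    intro C x _ y _ hxy
    refine disjoint_left.2 fun S hSx hSy => hxy ?_
    rw [← (mem_powersetCard.1 hSx).2, ← (mem_powersetCard.1 hSy).2]
  have hcard𝒜 : 𝒜F.card = n.choose 0 + ∑ a ∈ A', n.choose a := by
    rw [h𝒜F, card_biUnion (hdisj _), sum_insert h0A]
    simp [card_powersetCard, hΩcard]
  have hcard𝒝 : 𝒝F.card = n.choose 1 + ∑ b ∈ B', n.choose b := by
    rw [h𝒝F, card_biUnion (hdisj _), sum_insert h1B]
    simp [card_powersetCard, hΩcard]
  have hcards : 𝒜F.card = 𝒝F.card := by rw [hcard𝒜, hcard𝒝, hid]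
  have hemp : (∅ : Finset ℕ) ∈ 𝒜F := (hmem𝒜 ∅).2 ⟨empty_subset _, by simp⟩
  have hsing : ({n} : Finset ℕ) ∈ 𝒝F := by
    refine (hmem𝒝 {n}).2 ⟨?_, by simp⟩
    intro x hx
    rw [mem_singleton] at hx
    subst hx
    rw [hΩdef, mem_Icc]
    omega
  set t : {S // S ∈ 𝒜F.erase ∅} → Finset (Finset ℕ) :=
    fun x => (𝒝F.erase {n}).filter (fun T => x.1 ⊆ T ∨ T ⊆ x.1) with ht
  have hall : ∀ s : Finset {S // S ∈ 𝒜F.erase ∅}, s.card ≤ (s.biUnion t).card := by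
    intro s
    rcases s.eq_empty_or_nonempty with rfl | hsne
    · simp
    set X := s.image (fun x => x.1) with hX
    have hXcard : X.card = s.card := card_image_of_injective _ Subtype.val_injective
    have hXsub : X ⊆ 𝒜F.erase ∅ := by
      intro S hS; obtain ⟨x, -, rfl⟩ := mem_image.1 hS; exact x.2
    have hXne : X.Nonempty := hsne.image _
    have hXlev : ∀ S ∈ X, S.card ∈ A' := by
      intro S hS
      have h1 := hXsub hS
      rw [mem_erase] at h1
      have h2 := ((hmem𝒜 S).1 h1.2).2
      rw [mem_insert] at h2
      rcases h2 with h2 | h2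
      · exact absurd (card_eq_zero.1 h2) h1.1
      · exact h2
    have hXΩ : ∀ S ∈ X, S ⊆ Ω := fun S hS => ((hmem𝒜 S).1 (mem_of_mem_erase (hXsub hS))).1
    set Xa : ℕ → Finset (Finset ℕ) := fun a => X.filter (fun S => S.card = a) with hXa
    have hXsum : X.card = ∑ a ∈ A', (Xa a).card := card_eq_sum_card_fiberwise hXlev
    have hA'ne : A'.Nonempty := by
      obtain ⟨S, hS⟩ := hXne; exact ⟨S.card, hXlev S hS⟩
    obtain ⟨amax, hamaxA, hmax⟩ := A'.exists_max_image
      (fun a => ((Xa a).card : ℚ) / (n.choose a)) hA'ne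
    have hamax2 : 2 < amax := (hA' _ hamaxA).1
    have hamaxn : amax < n := (hA' _ hamaxA).2
    have hcross : ∀ a ∈ A', (Xa a).card * n.choose amax ≤ (Xa amax).card * n.choose a := by
      intro a ha
      have h1 := hmax a ha
      have hpa : (0:ℚ) < n.choose a := by
        exact_mod_cast Nat.choose_pos (le_of_lt (hA' a ha).2)
      have hpm : (0:ℚ) < n.choose amax := by exact_mod_cast Nat.choose_pos (le_of_lt hamaxn)
      rw [div_le_div_iff₀ hpa hpm] at h1
      exact_mod_cast h1
    set Xs := Xa amax with hXs
    have hXssubX : Xs ⊆ X := filter_subset _ _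
    have hXssub : Xs ⊆ Ω.powersetCard amax := by
      intro S hS
      exact mem_powersetCard.2 ⟨hXΩ S (hXssubX hS), (mem_filter.1 hS).2⟩
    have hXsne : Xs.Nonempty := by
      obtain ⟨S₀, hS₀⟩ := hXne
      have ha₀ := hXlev S₀ hS₀
      have h1 : 0 < (Xa S₀.card).card := card_pos.2 ⟨S₀, mem_filter.2 ⟨hS₀, rfl⟩⟩
      have hp : 0 < n.choose amax := Nat.choose_pos (le_of_lt hamaxn)
      have h3 : 0 < Xs.card * n.choose S₀.card :=
        lt_of_lt_of_le (Nat.mul_pos h1 hp) (hcross _ ha₀)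
      rw [← card_pos] at *
      exact Nat.pos_of_ne_zero (fun h => by simp [h] at h3)
    set U := (𝒝F.filter (fun T => ∃ S ∈ X, S ⊆ T ∨ T ⊆ S)).erase {n} with hU
    have hUsub : U ⊆ s.biUnion t := by
      intro T hT
      rw [hU, mem_erase, mem_filter] at hT
      obtain ⟨hTn, hT𝒝, S, hSX, hcomp⟩ := hT
      obtain ⟨x, hxs, rfl⟩ := mem_image.1 hSX
      refine mem_biUnion.2 ⟨x, hxs, ?_⟩
      exact mem_filter.2 ⟨mem_erase.2 ⟨hTn, hT𝒝⟩, hcomp⟩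
    refine le_trans ?_ (card_le_card hUsub)
    rw [← hXcard]
    have hXbound : X.card ≤ 𝒜F.card - 1 := by
      have h := card_le_card hXsub
      rwa [card_erase_of_mem hemp] at h
    have hXscardle : Xs.card ≤ n.choose amax := by
      have h := card_le_card hXssub
      rwa [card_powersetCard, hΩcard] at h
    rcases eq_or_lt_of_le hXscardle with heq | hlt
    · -- the maximizing level is full
      have hfull : Xs = Ω.powersetCard amax :=
        eq_of_subset_of_card_le hXssub (by rw [card_powersetCard, hΩcard, ← heq])
      have hUeq : 𝒝F.filter (fun T => ∃ S ∈ X, S ⊆ T ∨ T ⊆ S) = 𝒝F := by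
        refine filter_true_of_mem fun T hT => ?_
        obtain ⟨hTΩ, hTb⟩ := (hmem𝒝 T).1 hT
        rcases le_or_gt T.card amax with h | h
        · obtain ⟨S, hTS, hSΩ, hSc⟩ := exists_subsuperset_card_eq (n := amax) hTΩ
            (by omega) (by rw [hΩcard]; omega)
          have hmem : S ∈ Xs := hfull ▸ mem_powersetCard.2 ⟨hSΩ, hSc⟩
          exact ⟨S, hXssubX hmem, Or.inr hTS⟩
        · obtain ⟨S, hST, hSc⟩ := exists_subset_card_eq (n := amax) (s := T) (by omega)
          have hmem : S ∈ Xs := hfull ▸ mem_powersetCard.2 ⟨hST.trans hTΩ, hSc⟩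
          exact ⟨S, hXssubX hmem, Or.inl hST⟩
      rw [hU, hUeq, card_erase_of_mem hsing, ← hcards]
      exact hXbound
    · -- strict case
      set V : ℕ → Finset (Finset ℕ) :=
        fun b => (Ω.powersetCard b).filter (fun T => ∃ S ∈ Xs, S ⊆ T ∨ T ⊆ S) with hV
      have hVbound : ∀ b ∈ insert 1 B',
          Xs.card * n.choose b < (V b).card * n.choose amax := by
        intro b hb
        have hbn : b < n := by
          rw [mem_insert] at hb
          rcases hb with rfl | hb
          · omega
          · exact (hB' b hb).2
        have hbamax : b ≠ amax := by
          rw [mem_insert] at hb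
          rcases hb with rfl | hb
          · omega
          · intro h; subst h; exact disjoint_left.1 hAB hamaxA hb
        rcases lt_or_gt_of_ne hbamax with hlt' | hgt'
        · have hVeq : V b = low Ω b Xs := by
            simp only [hV, low]
            refine filter_congr fun T hT => ?_
            have hTb : T.card = b := (mem_powersetCard.1 hT).2
            constructor
            · rintro ⟨S, hS, hc | hc⟩
              · exfalso
                have h1 := card_le_card hc
                have h2 : S.card = amax := (mem_filter.1 hS).2
                omega
              · exact ⟨S, hS, hc⟩
            · rintro ⟨S, hS, hc⟩; exact ⟨S, hS, Or.inr hc⟩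
          have h := iter_strict (Ω := Ω) (k := amax) (by rw [hΩcard]; omega)
            (amax - b) (by omega) (by omega) Xs hXssub hXsne (by rw [hΩcard]; exact hlt)
          have harith : amax - (amax - b) = b := by omega
          rw [harith, hΩcard] at h
          rw [hVeq]
          exact h
        · have hVeq : V b = upp Ω b Xs := by
            simp only [hV, upp]
            refine filter_congr fun T hT => ?_
            have hTb : T.card = b := (mem_powersetCard.1 hT).2
            constructor
            · rintro ⟨S, hS, hc | hc⟩
              · exact ⟨S, hS, hc⟩
              · exfalso
                have h1 := card_le_card hc
                have h2 : S.card = amax := (mem_filter.1 hS).2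
                omega
            · rintro ⟨S, hS, hc⟩; exact ⟨S, hS, Or.inl hc⟩
          have h := upp_bound_strict (Ω := Ω) (k := amax) (b := b) hXssub hgt'
            (by rw [hΩcard]; omega) hXsne (by rw [hΩcard]; exact hlt)
          rw [hΩcard] at h
          rw [hVeq]
          exact h
      have hBsum : ∑ b ∈ insert 1 B', n.choose b = 𝒝F.card := by
        rw [sum_insert h1B, hcard𝒝]
      set W := (insert 1 B').biUnion V with hW
      have hWcard : W.card = ∑ b ∈ insert 1 B', (V b).card := by
        refine card_biUnion fun x hx y hy hxy => ?_
        exact Disjoint.mono (filter_subset _ _) (filter_subset _ _)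
          (hdisj (insert 1 B') x hx y hy hxy)
      have hsumlt : ∑ b ∈ insert 1 B', Xs.card * n.choose b
          < ∑ b ∈ insert 1 B', (V b).card * n.choose amax :=
        Finset.sum_lt_sum_of_nonempty ⟨1, mem_insert_self 1 B'⟩ hVbound
      have hfinal : X.card * n.choose amax < W.card * n.choose amax := by
        have hXspos : 0 < Xs.card := card_pos.2 hXsne
        calc X.card * n.choose amax = ∑ a ∈ A', (Xa a).card * n.choose amax := by
              rw [hXsum, sum_mul]
          _ ≤ ∑ a ∈ A', Xs.card * n.choose a := Finset.sum_le_sum hcross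
          _ = Xs.card * ∑ a ∈ A', n.choose a := by rw [mul_sum]
          _ < Xs.card * (1 + ∑ a ∈ A', n.choose a) := by
              exact mul_lt_mul_of_pos_left (by omega) hXspos
          _ = Xs.card * 𝒜F.card := by rw [hcard𝒜, Nat.choose_zero_right]
          _ = Xs.card * 𝒝F.card := by rw [hcards]
          _ = ∑ b ∈ insert 1 B', Xs.card * n.choose b := by rw [← mul_sum, hBsum]
          _ < ∑ b ∈ insert 1 B', (V b).card * n.choose amax := hsumlt
          _ = W.card * n.choose amax := by rw [← sum_mul, hWcard]
      have hWX : X.card < W.card := Nat.lt_of_mul_lt_mul_right hfinal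
      have hWsub : W ⊆ 𝒝F.filter (fun T => ∃ S ∈ X, S ⊆ T ∨ T ⊆ S) := by
        intro T hT
        obtain ⟨b, hb, hTb⟩ := mem_biUnion.1 hT
        obtain ⟨hTpc, S, hS, hc⟩ := mem_filter.1 hTb
        obtain ⟨hTΩ, hTc⟩ := mem_powersetCard.1 hTpc
        refine mem_filter.2 ⟨(hmem𝒝 T).2 ⟨hTΩ, by rw [hTc]; exact hb⟩, S, hXssubX hS, hc⟩
      have hWle := card_le_card hWsub
      have hpred := Finset.pred_card_le_card_erase
        (s := 𝒝F.filter (fun T => ∃ S ∈ X, S ⊆ T ∨ T ⊆ S)) (a := {n})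
      rw [hU]
      omega
  obtain ⟨f, hfinj, hf⟩ := (Finset.all_card_le_biUnion_card_iff_exists_injective t).1 hall
  have hfprop : ∀ x, f x ∈ 𝒝F.erase {n} ∧ (x.1 ⊆ f x ∨ f x ⊆ x.1) :=
    fun x => mem_filter.1 (hf x)
  set Φ : Finset ℕ → Finset ℕ :=
    fun S => if h : S ∈ 𝒜F.erase ∅ then f ⟨S, h⟩ else {n} with hΦ
  have hΦempty : Φ ∅ = {n} := by
    rw [hΦ]
    simp
  have hΦmapsto : ∀ S ∈ 𝒜F, Φ S ∈ 𝒝F := by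
    intro S hS
    by_cases h : S ∈ 𝒜F.erase ∅
    · rw [hΦ]
      simp only [dif_pos h]
      exact mem_of_mem_erase (hfprop ⟨S, h⟩).1
    · have hSe : S = ∅ := by
        by_contra hne; exact h (mem_erase.2 ⟨hne, hS⟩)
      rw [hSe, hΦempty]
      exact hsing
  have hΦinj : Set.InjOn Φ ↑𝒜F := by
    have key : ∀ S, S ∈ 𝒜F → S ≠ ∅ → Φ S ≠ {n} := by
      intro S hS hne
      have h : S ∈ 𝒜F.erase ∅ := mem_erase.2 ⟨hne, hS⟩
      rw [hΦ]
      simp only [dif_pos h]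
      exact (mem_erase.1 (hfprop ⟨S, h⟩).1).1
    intro S hS S' hS' heq
    rw [mem_coe] at hS hS'
    by_cases h : S = ∅ <;> by_cases h' : S' = ∅
    · rw [h, h']
    · exfalso
      rw [h, hΦempty] at heq
      exact key S' hS' h' heq.symm
    · exfalso
      rw [h', hΦempty] at heq
      exact key S hS h heq
    · have hm : S ∈ 𝒜F.erase ∅ := mem_erase.2 ⟨h, hS⟩
      have hm' : S' ∈ 𝒜F.erase ∅ := mem_erase.2 ⟨h', hS'⟩
      rw [hΦ] at heq
      simp only [dif_pos hm, dif_pos hm'] at heq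
      exact congrArg Subtype.val (hfinj heq)
  have himg : 𝒜F.image Φ = 𝒝F := by
    refine eq_of_subset_of_card_le ?_ ?_
    · intro T hT
      obtain ⟨S, hS, rfl⟩ := mem_image.1 hT
      exact hΦmapsto S hS
    · rw [card_image_of_injOn hΦinj]
      exact le_of_eq hcards.symm
  have hsetA : {S : Finset ℕ | S ⊆ Ω ∧ S.card ∈ insert 0 A'} = ↑𝒜F := by
    ext S
    rw [Set.mem_setOf_eq, mem_coe, hmem𝒜]
  have hsetB : {T : Finset ℕ | T ⊆ Ω ∧ T.card ∈ insert 1 B'} = ↑𝒝F := by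
    ext T
    rw [Set.mem_setOf_eq, mem_coe, hmem𝒝]
  refine ⟨Φ, ?_, hΦempty, ?_⟩
  · rw [hsetA, hsetB]
    refine ⟨fun S hS => ?_, hΦinj, fun T hT => ?_⟩
    · exact mem_coe.2 (hΦmapsto S (mem_coe.1 hS))
    · rw [mem_coe, ← himg] at hT
      obtain ⟨S, hS, rfl⟩ := mem_image.1 hT
      exact ⟨S, mem_coe.2 hS, rfl⟩
  · intro S hS1 hS2
    by_cases h : S = ∅
    · rw [h]
      left
      exact empty_subset _
    · have hm : S ∈ 𝒜F.erase ∅ := mem_erase.2 ⟨h, (hmem𝒜 S).2 ⟨hS1, hS2⟩⟩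
      rw [hΦ]
      simp only [dif_pos hm]
      exact (hfprop ⟨S, hm⟩).2
end

section
/- If n = p^α is a prime power (p prime, α ≥ 1), then no fundamental binomial identity associated to n exists. That is, there are no indices 1 ≤ a_1 < … < a_k < n and 1 ≤ b_1 < … < b_m < n with a_i ≠ b_j for all i, j, such that C(n,0) + C(n,a_1) + … + C(n,a_k) = C(n,b_1) + … + C(n,b_m). -/
/-- If `n = p^α` is a prime power (`p` prime, `α ≥ 1`), then no fundamental binomial
identity associated to `n` exists: there are no disjoint sets of indices
`A, B ⊆ {1,…,n−1}` with `C(n,0) + ∑_{a ∈ A} C(n,a) = ∑_{b ∈ B} C(n,b)`. -/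
theorem no_fundamental_identity_prime_power (n p α : ℕ) (hp : p.Prime)
    (hα : 1 ≤ α) (hn : n = p ^ α) :
    ¬ ∃ A B : Finset ℕ,
        (∀ a ∈ A, 1 ≤ a ∧ a < n) ∧ (∀ b ∈ B, 1 ≤ b ∧ b < n) ∧
        Disjoint A B ∧
        n.choose 0 + ∑ a ∈ A, n.choose a = ∑ b ∈ B, n.choose b := by
  rintro ⟨A, B, hA, hB, -, heq⟩
  have hdvd : ∀ (S : Finset ℕ), (∀ x ∈ S, 1 ≤ x ∧ x < n) → p ∣ ∑ x ∈ S, n.choose x := by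
    intro S hS
    refine Finset.dvd_sum fun x hx => ?_
    obtain ⟨h1, h2⟩ := hS x hx
    subst hn
    exact hp.dvd_choose_pow (by omega) (by omega)
  have h1 : p ∣ ∑ a ∈ A, n.choose a := hdvd A hA
  have h2 : p ∣ ∑ b ∈ B, n.choose b := hdvd B hB
  rw [Nat.choose_zero_right] at heq
  have : p ∣ 1 := by
    have := Nat.dvd_sub h2 h1
    rwa [← heq, Nat.add_sub_cancel] at this
  exact hp.one_lt.ne' (Nat.eq_one_of_dvd_one this ▸ rfl) |>.elim
end

section
/- Let n = p^k · q^m, where p and q are distinct primes, k ≥ 1, m ≥ 0, and suppose p ≥ 2^{q^m}. Then there does not exist any binomial identity of the form C(n,0) + C(n,a_1) + … + C(n,a_k) = C(n,1) + C(n,b_1) + … + C(n,b_m) with 2 < a_1 < … < a_k < n, 1 < b_1 < … < b_m < n, and a_i ≠ b_j for all i, j. -/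
/-- One-sided Lucas: `C(c·p^k, j) mod p` is `C(c, j/p^k)` if `p^k ∣ j`, else `0`. -/
lemma lucas_pow (p : ℕ) [Fact p.Prime] (c : ℕ) : ∀ (k j : ℕ),
    (((c * p ^ k).choose j : ℕ) : ZMod p) =
      if p ^ k ∣ j then ((c.choose (j / p ^ k) : ℕ) : ZMod p) else 0 := by
  intro k
  induction k with
  | zero => simp
  | succ k ih =>
    intro j
    have hp : 0 < p := (Fact.out : p.Prime).pos
    have hmul : c * p ^ (k + 1) = (c * p ^ k) * p := by ring
    have hstep := Choose.choose_modEq_choose_mod_mul_choose_div_nat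
      (p := p) (n := c * p ^ (k + 1)) (k := j)
    have hcast : (((c * p ^ (k + 1)).choose j : ℕ) : ZMod p)
        = ((((c * p ^ (k + 1)) % p).choose (j % p)
            * ((c * p ^ (k + 1)) / p).choose (j / p) : ℕ) : ZMod p) :=
      (ZMod.natCast_eq_natCast_iff _ _ _).mpr hstep
    have hmod : (c * p ^ (k + 1)) % p = 0 := by rw [hmul]; exact Nat.mul_mod_left _ _
    have hdiv : (c * p ^ (k + 1)) / p = c * p ^ k := by
      rw [hmul]; exact Nat.mul_div_cancel _ hp
    rw [hmod, hdiv] at hcast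
    by_cases hj : p ∣ j
    · have hjm : j % p = 0 := Nat.eq_zero_of_dvd_of_lt (Nat.dvd_mod_iff dvd_rfl |>.mpr hj) (Nat.mod_lt _ hp)
      have h0 : Nat.choose 0 (j % p) = 1 := by rw [hjm]; rfl
      rw [hcast, h0, one_mul, ih (j / p)]
      have hiff : p ^ k ∣ j / p ↔ p ^ (k + 1) ∣ j := by
        rw [Nat.dvd_div_iff_mul_dvd hj, pow_succ, mul_comm]
      have hdd : j / p / p ^ k = j / p ^ (k + 1) := by
        rw [Nat.div_div_eq_div_mul, pow_succ, mul_comm]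
      rw [hdd, if_congr hiff rfl rfl]
    · have hjm : j % p ≠ 0 := fun h => hj (Nat.dvd_of_mod_eq_zero h)
      have h0 : Nat.choose 0 (j % p) = 0 :=
        Nat.choose_eq_zero_of_lt (Nat.pos_of_ne_zero hjm)
      have hnd : ¬ p ^ (k + 1) ∣ j := fun h =>
        hj (dvd_trans (dvd_pow_self p (Nat.succ_ne_zero k)) h)
      rw [hcast, if_neg hnd, h0]
      simp

/-- Let `n = p^k · q^m` with `p, q` distinct primes, `k ≥ 1`, `m ≥ 0`, and `p ≥ 2^(q^m)`.
Then there exists no binomial identity of the form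
`C(n,0) + ∑_{a ∈ A} C(n,a) = C(n,1) + ∑_{b ∈ B} C(n,b)` with `2 < a < n` for all
`a ∈ A`, `1 < b < n` for all `b ∈ B`, and `A` disjoint from `B`. -/
theorem no_type_two_identity (n p q k m : ℕ) (hp : p.Prime) (hq : q.Prime)
    (hpq : p ≠ q) (hk : 1 ≤ k) (hn : n = p ^ k * q ^ m)
    (hbig : 2 ^ (q ^ m) ≤ p) :
    ¬ ∃ A B : Finset ℕ,
        (∀ a ∈ A, 2 < a ∧ a < n) ∧ (∀ b ∈ B, 1 < b ∧ b < n) ∧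
        Disjoint A B ∧
        n.choose 0 + ∑ a ∈ A, n.choose a
          = n.choose 1 + ∑ b ∈ B, n.choose b := by
  rintro ⟨A, B, hA, hB, -, heq⟩
  haveI : Fact p.Prime := ⟨hp⟩
  set N := q ^ m with hN
  have hN1 : 1 ≤ N := Nat.one_le_pow _ _ hq.pos
  have hN2 : 2 ≤ 2 ^ N := by
    calc 2 = 2 ^ 1 := rfl
    _ ≤ 2 ^ N := Nat.pow_le_pow_right (by norm_num) hN1
  have hpk : 0 < p ^ k := pow_pos hp.pos k
  have hn' : n = N * p ^ k := by rw [hn]; ring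
  -- sum over Ioo bound
  have hIoo : ∑ t ∈ Finset.Ioo 0 N, N.choose t + 2 ≤ 2 ^ N := by
    have hsub : insert 0 (insert N (Finset.Ioo 0 N)) ⊆ Finset.range (N + 1) := by
      intro t ht
      simp only [Finset.mem_insert, Finset.mem_Ioo] at ht
      simp only [Finset.mem_range]
      omega
    have h0 : (0 : ℕ) ∉ insert N (Finset.Ioo 0 N) := by
      simp only [Finset.mem_insert, Finset.mem_Ioo]; omega
    have hNn : N ∉ Finset.Ioo 0 N := by simp
    calc ∑ t ∈ Finset.Ioo 0 N, N.choose t + 2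
        = ∑ t ∈ insert 0 (insert N (Finset.Ioo 0 N)), N.choose t := by
          rw [Finset.sum_insert h0, Finset.sum_insert hNn, Nat.choose_zero_right,
            Nat.choose_self]; ring
      _ ≤ ∑ t ∈ Finset.range (N + 1), N.choose t :=
          Finset.sum_le_sum_of_subset hsub
      _ = 2 ^ N := Nat.sum_range_choose N
  -- generic facts about filtered sums
  have main : ∀ C' : Finset ℕ, (∀ a ∈ C', 0 < a ∧ a < n ∧ p ^ k ∣ a) →
      (∑ a ∈ C', N.choose (a / p ^ k)) + 2 ≤ 2 ^ N ∧
        q ∣ ∑ a ∈ C', N.choose (a / p ^ k) := by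
    intro C' hC'
    have hmem : ∀ a ∈ C', 0 < a / p ^ k ∧ a / p ^ k < N := by
      intro a ha
      obtain ⟨h1, h2, h3⟩ := hC' a ha
      refine ⟨Nat.div_pos (Nat.le_of_dvd h1 h3) hpk, ?_⟩
      rw [Nat.div_lt_iff_lt_mul hpk]
      rw [hn'] at h2; exact h2
    refine ⟨?_, Finset.dvd_sum fun a ha =>
      hN ▸ hq.dvd_choose_pow (hmem a ha).1.ne' (hmem a ha).2.ne⟩
    have hinj : ∀ a ∈ C', ∀ b ∈ C', a / p ^ k = b / p ^ k → a = b := by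
      intro a ha b hb hab
      obtain ⟨-, -, h3a⟩ := hC' a ha
      obtain ⟨-, -, h3b⟩ := hC' b hb
      rw [← Nat.div_mul_cancel h3a, ← Nat.div_mul_cancel h3b, hab]
    have heqimg : ∑ a ∈ C', N.choose (a / p ^ k)
        = ∑ t ∈ C'.image (· / p ^ k), N.choose t := (Finset.sum_image hinj).symm
    have himg : C'.image (· / p ^ k) ⊆ Finset.Ioo 0 N := by
      intro t ht
      obtain ⟨a, ha, rfl⟩ := Finset.mem_image.mp ht
      simpa using hmem a ha
    calc (∑ a ∈ C', N.choose (a / p ^ k)) + 2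
        = (∑ t ∈ C'.image (· / p ^ k), N.choose t) + 2 := by rw [heqimg]
      _ ≤ (∑ t ∈ Finset.Ioo 0 N, N.choose t) + 2 :=
          Nat.add_le_add_right (Finset.sum_le_sum_of_subset himg) 2
      _ ≤ 2 ^ N := hIoo
  set A' := A.filter (fun a => p ^ k ∣ a) with hA'
  set B' := B.filter (fun b => p ^ k ∣ b) with hB'
  have hA'' : ∀ a ∈ A', 0 < a ∧ a < n ∧ p ^ k ∣ a := by
    intro a ha
    obtain ⟨ha1, ha2⟩ := Finset.mem_filter.mp ha
    obtain ⟨h1, h2⟩ := hA a ha1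
    exact ⟨by omega, h2, ha2⟩
  have hB'' : ∀ b ∈ B', 0 < b ∧ b < n ∧ p ^ k ∣ b := by
    intro b hb
    obtain ⟨hb1, hb2⟩ := Finset.mem_filter.mp hb
    obtain ⟨h1, h2⟩ := hB b hb1
    exact ⟨by omega, h2, hb2⟩
  set SA := ∑ a ∈ A', N.choose (a / p ^ k) with hSA
  set SB := ∑ b ∈ B', N.choose (b / p ^ k) with hSB
  obtain ⟨hSAb, hSAq⟩ := main A' hA''
  obtain ⟨hSBb, hSBq⟩ := main B' hB''
  -- reduce the identity mod p
  have hsum : ∀ C : Finset ℕ, ((∑ a ∈ C, n.choose a : ℕ) : ZMod p)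
      = ((∑ a ∈ C.filter (fun a => p ^ k ∣ a), N.choose (a / p ^ k) : ℕ) : ZMod p) := by
    intro C
    rw [Nat.cast_sum, Nat.cast_sum, Finset.sum_filter]
    refine Finset.sum_congr rfl fun a _ => ?_
    rw [hn']
    exact lucas_pow p N k a
  have hn0 : ((n : ℕ) : ZMod p) = 0 := by
    rw [ZMod.natCast_eq_zero_iff, hn]
    exact dvd_mul_of_dvd_left (dvd_pow_self p (by omega)) _
  rw [← hSA] at hSAb hSAq
  rw [← hSB] at hSBb hSBq
  have key : ((1 + SA : ℕ) : ZMod p) = ((SB : ℕ) : ZMod p) := by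
    have h := congrArg (fun x : ℕ => (x : ZMod p)) heq
    simp only [Nat.choose_zero_right, Nat.choose_one_right] at h
    rw [Nat.cast_add, Nat.cast_add, hsum A, hsum B, hn0, zero_add, Nat.cast_one] at h
    rw [Nat.cast_add, Nat.cast_one]
    exact h
  -- lift back to ℕ
  have hlt1 : 1 + SA < p := by omega
  have hlt2 : SB < p := by omega
  have heqN : 1 + SA = SB := by
    have h := (ZMod.natCast_eq_natCast_iff _ _ _).mp key
    rwa [Nat.ModEq, Nat.mod_eq_of_lt hlt1, Nat.mod_eq_of_lt hlt2] at h
  have : q ∣ 1 := by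
    have := Nat.dvd_sub hSBq hSAq
    rwa [show SB - SA = 1 by omega] at this
  have hq2 := hq.two_le
  have := Nat.le_of_dvd one_pos this
  omega
end

section
/- Let n = p^k · q^m, where p and q are distinct primes, k ≥ 1, m ≥ 0, and suppose p ≥ 2^{q^m}. Then no fundamental binomial identity associated to n exists: there are no indices 1 ≤ a_1 < … < a_k < n and 1 ≤ b_1 < … < b_m < n with a_i ≠ b_j for all i, j, such that C(n,0) + C(n,a_1) + … + C(n,a_k) = C(n,b_1) + … + C(n,b_m). -/
open Finset

private lemma lucas_pow_aux {p : ℕ} [Fact p.Prime] (k : ℕ) (N a : ℕ) :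
    ((N * p ^ k).choose a : ZMod p) =
      if p ^ k ∣ a then (N.choose (a / p ^ k) : ZMod p) else 0 := by
  induction k generalizing a with
  | zero => simp
  | succ k ih =>
    have hp : 0 < p := (Fact.out : p.Prime).pos
    have h := (Choose.choose_modEq_choose_mod_mul_choose_div_nat
      (n := N * p ^ (k + 1)) (k := a) (p := p))
    rw [← ZMod.natCast_eq_natCast_iff] at h
    have hmod : (N * p ^ (k + 1)) % p = 0 := by
      rw [pow_succ, ← mul_assoc, Nat.mul_mod_left]
    have hdiv : (N * p ^ (k + 1)) / p = N * p ^ k := by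
      rw [pow_succ, ← mul_assoc, Nat.mul_div_cancel _ hp]
    rw [hmod, hdiv] at h
    by_cases hpa : p ∣ a
    · have ha0 : a % p = 0 := Nat.eq_zero_of_dvd_of_lt ((Nat.dvd_mod_iff dvd_rfl).mpr hpa) (Nat.mod_lt _ hp)
      rw [h, ha0, Nat.choose_self, one_mul, ih]
      by_cases hd : p ^ (k + 1) ∣ a
      · have h1 : p ^ k ∣ a / p := (Nat.dvd_div_iff_mul_dvd hpa).mpr (by rwa [← pow_succ'])
        have h2 : a / p / p ^ k = a / p ^ (k + 1) := by
          rw [Nat.div_div_eq_div_mul, ← pow_succ']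
        simp [hd, h1, h2]
      · have h1 : ¬ p ^ k ∣ a / p := fun hh =>
          hd (by rw [pow_succ']; exact (Nat.dvd_div_iff_mul_dvd hpa).mp hh)
        simp [hd, h1]
    · have ha0 : a % p ≠ 0 := fun h0 => hpa (Nat.dvd_of_mod_eq_zero h0)
      obtain ⟨s, hs⟩ := Nat.exists_eq_succ_of_ne_zero ha0
      rw [h, hs, Nat.choose_zero_succ]
      have : ¬ p ^ (k + 1) ∣ a := fun hd => hpa (dvd_trans (dvd_pow_self p (Nat.succ_ne_zero k)) hd)
      simp [this]

/-- Let `n = p^k · q^m` with `p, q` distinct primes, `k ≥ 1`, `m ≥ 0`, and `p ≥ 2^(q^m)`.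
Then no fundamental binomial identity associated to `n` exists: there are no disjoint
sets of indices `A, B ⊆ {1,…,n−1}` with
`C(n,0) + ∑_{a ∈ A} C(n,a) = ∑_{b ∈ B} C(n,b)`. -/
theorem no_fundamental_identity (n p q k m : ℕ) (hp : p.Prime) (hq : q.Prime)
    (hpq : p ≠ q) (hk : 1 ≤ k) (hn : n = p ^ k * q ^ m)
    (hbig : 2 ^ (q ^ m) ≤ p) :
    ¬ ∃ A B : Finset ℕ,
        (∀ a ∈ A, 1 ≤ a ∧ a < n) ∧ (∀ b ∈ B, 1 ≤ b ∧ b < n) ∧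
        Disjoint A B ∧
        n.choose 0 + ∑ a ∈ A, n.choose a = ∑ b ∈ B, n.choose b := by
  rintro ⟨A, B, hA, hB, -, heq⟩
  haveI : Fact p.Prime := ⟨hp⟩
  set N := q ^ m with hN
  set P := p ^ k with hP
  have hn' : n = N * P := by rw [hn, mul_comm]
  have hN1 : 1 ≤ N := Nat.one_le_pow _ _ hq.pos
  have hPpos : 0 < P := pow_pos hp.pos k
  rw [Nat.choose_zero_right] at heq
  have hinj : ∀ S : Finset ℕ, ∀ x ∈ S.filter (P ∣ ·), ∀ y ∈ S.filter (P ∣ ·),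
      x / P = y / P → x = y := by
    intro S x hx y hy hxy
    rw [Finset.mem_filter] at hx hy
    rw [← Nat.div_mul_cancel hx.2, ← Nat.div_mul_cancel hy.2, hxy]
  have hsub : ∀ S : Finset ℕ, (∀ a ∈ S, 1 ≤ a ∧ a < n) →
      (S.filter (P ∣ ·)).image (· / P) ⊆ Finset.Ioo 0 N := by
    intro S hS j hj
    simp only [Finset.mem_image, Finset.mem_filter] at hj
    obtain ⟨a, ⟨haS, hPa⟩, rfl⟩ := hj
    obtain ⟨h1, h2⟩ := hS a haS
    refine Finset.mem_Ioo.mpr ⟨Nat.div_pos (Nat.le_of_dvd (by omega) hPa) hPpos, ?_⟩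
    rw [Nat.div_lt_iff_lt_mul hPpos]
    calc a < n := h2
      _ = N * P := hn'
  have hcast : ∀ S : Finset ℕ, ((∑ a ∈ S, n.choose a : ℕ) : ZMod p)
      = ((∑ j ∈ (S.filter (P ∣ ·)).image (· / P), N.choose j : ℕ) : ZMod p) := by
    intro S
    push_cast
    rw [Finset.sum_image (hinj S), Finset.sum_filter]
    exact Finset.sum_congr rfl fun a _ => by rw [hn']; exact lucas_pow_aux k N a
  set A' := (A.filter (P ∣ ·)).image (· / P) with hA'
  set B' := (B.filter (P ∣ ·)).image (· / P) with hB'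
  set SA := ∑ j ∈ A', N.choose j with hSA
  set SB := ∑ j ∈ B', N.choose j with hSB
  have key : ((1 + SA : ℕ) : ZMod p) = ((SB : ℕ) : ZMod p) := by
    have h := congrArg (Nat.cast : ℕ → ZMod p) heq
    push_cast at h ⊢
    rw [show ((SA : ℕ) : ZMod p) = _ from (hcast A).symm,
      show ((SB : ℕ) : ZMod p) = _ from (hcast B).symm]
    push_cast
    exact h
  have hsum_T : ∑ j ∈ Finset.Ioo 0 N, N.choose j + 2 ≤ 2 ^ N := by
    have hT : Finset.Ioo 0 N ⊆ Finset.range (N + 1) := by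
      intro x hx; rw [Finset.mem_Ioo] at hx; rw [Finset.mem_range]; omega
    have h1 : ({0, N} : Finset ℕ) ⊆ Finset.range (N + 1) \ Finset.Ioo 0 N := by
      intro x hx
      rw [Finset.mem_insert, Finset.mem_singleton] at hx
      rw [Finset.mem_sdiff, Finset.mem_range, Finset.mem_Ioo]
      omega
    have h2 : (2 : ℕ) ≤ ∑ j ∈ Finset.range (N + 1) \ Finset.Ioo 0 N, N.choose j := by
      calc (2 : ℕ) = ∑ j ∈ ({0, N} : Finset ℕ), N.choose j := by
            rw [Finset.sum_pair (by omega : (0 : ℕ) ≠ N)]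
            simp
        _ ≤ _ := Finset.sum_le_sum_of_subset h1
    have h3 := Finset.sum_sdiff (f := N.choose) hT
    rw [Nat.sum_range_choose] at h3
    omega
  have hSAle : SA ≤ 2 ^ N - 2 := by
    have h : SA ≤ ∑ j ∈ Finset.Ioo 0 N, N.choose j :=
      Finset.sum_le_sum_of_subset (hsub A hA)
    omega
  have hSBle : SB ≤ 2 ^ N - 2 := by
    have h : SB ≤ ∑ j ∈ Finset.Ioo 0 N, N.choose j :=
      Finset.sum_le_sum_of_subset (hsub B hB)
    omega
  have h2N : 2 ≤ 2 ^ N := by omega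
  have hnat : 1 + SA = SB := by
    rw [ZMod.natCast_eq_natCast_iff, Nat.ModEq,
      Nat.mod_eq_of_lt (by omega : 1 + SA < p), Nat.mod_eq_of_lt (by omega : SB < p)] at key
    exact key
  have hdvd : ∀ S' : Finset ℕ, S' ⊆ Finset.Ioo 0 N → q ∣ ∑ j ∈ S', N.choose j := by
    intro S' hS'
    refine Finset.dvd_sum fun j hj => ?_
    have := Finset.mem_Ioo.mp (hS' hj)
    exact hq.dvd_choose_pow (by omega) (by omega)
  have hq1 : q ∣ 1 := by
    have h1 := hdvd A' (hsub A hA)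
    have h2 := hdvd B' (hsub B hB)
    have : SB - SA = 1 := by omega
    rw [← this]
    exact Nat.dvd_sub h2 h1
  have := Nat.le_of_dvd one_pos hq1
  have := hq.two_le
  omega
end

section
/- There is no choice of coefficients ε_1, …, ε_{N-1} ∈ {-1, 0, 1}, where N = q^m for a prime q and m ≥ 1, and a prime p ≥ 2^N distinct from q, such that ε_1·C(N,1) + ε_2·C(N,2) + … + ε_{N-1}·C(N,N-1) ≡ 1 (mod p). Equivalently: if ε_1, …, ε_{N-1} ∈ {-1,0,1} with N = q^m (q prime, m ≥ 1) and p ≥ 2^N is a prime, then ∑_{i=1}^{N-1} ε_i·C(N,i) ≢ 1 (mod p). -/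
/-- Let `N = q^m` with `q` prime and `m ≥ 1`, and let `p` be a prime distinct from `q`
with `p ≥ 2^N`. Then for any coefficients `ε_1, …, ε_{N−1} ∈ {−1, 0, 1}` we have
`∑_{i=1}^{N−1} ε_i · C(N,i) ≢ 1 (mod p)`. -/
theorem signed_binomial_sum_not_one_mod_p (q m N p : ℕ) (hq : q.Prime)
    (hm : 1 ≤ m) (hN : N = q ^ m) (hp : p.Prime) (hpq : p ≠ q)
    (hbig : 2 ^ N ≤ p) (ε : ℕ → ℤ)
    (hε : ∀ i, ε i = -1 ∨ ε i = 0 ∨ ε i = 1) :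
    ¬ (∑ i ∈ Finset.Ico 1 N, ε i * (N.choose i : ℤ)) ≡ 1 [ZMOD p] := by
  intro hcong
  set S : ℤ := ∑ i ∈ Finset.Ico 1 N, ε i * (N.choose i : ℤ) with hS
  -- N ≥ 2
  have hN2 : 2 ≤ N := by
    rw [hN]
    calc 2 ≤ q := hq.two_le
    _ = q ^ 1 := (pow_one q).symm
    _ ≤ q ^ m := Nat.pow_le_pow_right hq.pos hm
  -- |S| ≤ 2^N - 2
  have habs : |S| ≤ (2 : ℤ) ^ N - 2 := by
    calc |S| ≤ ∑ i ∈ Finset.Ico 1 N, |ε i * (N.choose i : ℤ)| :=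
          Finset.abs_sum_le_sum_abs _ _
      _ ≤ ∑ i ∈ Finset.Ico 1 N, (N.choose i : ℤ) := by
          apply Finset.sum_le_sum
          intro i _
          rw [abs_mul]
          have h1 : |ε i| ≤ 1 := by rcases hε i with h | h | h <;> simp [h]
          calc |ε i| * |(N.choose i : ℤ)| ≤ 1 * |(N.choose i : ℤ)| := by
                apply mul_le_mul_of_nonneg_right h1 (abs_nonneg _)
            _ = (N.choose i : ℤ) := by rw [one_mul, abs_of_nonneg (by positivity)]
      _ = (2 : ℤ) ^ N - 2 := by
          have : ∑ i ∈ Finset.range (N + 1), N.choose i = 2 ^ N := Nat.sum_range_choose N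
          have hsplit : ∑ i ∈ Finset.range (N + 1), (N.choose i : ℤ)
              = 1 + (∑ i ∈ Finset.Ico 1 N, (N.choose i : ℤ)) + 1 := by
            rw [Finset.range_eq_Ico, Finset.sum_eq_sum_Ico_succ_bot (by omega),
              show N + 1 = N + 1 from rfl, Finset.sum_Ico_succ_top (by omega)]
            simp [Nat.choose_self]
            ring
          have h2 : ∑ i ∈ Finset.range (N + 1), (N.choose i : ℤ) = 2 ^ N := by
            exact_mod_cast congrArg (Nat.cast : ℕ → ℤ) this
          rw [h2] at hsplit
          linarith
  -- p ∣ S - 1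
  have hdvd : (p : ℤ) ∣ S - 1 := Int.ModEq.dvd (Int.ModEq.symm hcong)
  have hSeq : S = 1 := by
    by_contra hne
    have h0 : S - 1 ≠ 0 := sub_ne_zero.mpr hne
    have habs' : |S - 1| ≤ (2 : ℤ) ^ N - 1 := by
      calc |S - 1| ≤ |S| + |(1:ℤ)| := abs_sub S 1
        _ ≤ (2 : ℤ) ^ N - 2 + 1 := by rw [abs_one]; linarith
        _ = (2 : ℤ) ^ N - 1 := by ring
    have hple : (p : ℤ) ≤ |S - 1| := Int.le_of_dvd (abs_pos.mpr h0) ((dvd_abs _ _).mpr hdvd)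
    have hbig' : (2 : ℤ) ^ N ≤ (p : ℤ) := by exact_mod_cast hbig
    linarith
  -- but q ∣ S
  have hqS : (q : ℤ) ∣ S := by
    apply Finset.dvd_sum
    intro i hi
    simp only [Finset.mem_Ico] at hi
    have : q ∣ N.choose i := by
      rw [hN]
      exact Nat.Prime.dvd_choose_pow hq (by omega) (by rw [← hN]; omega)
    exact Dvd.dvd.mul_left (Int.natCast_dvd_natCast.mpr this) _
  rw [hSeq] at hqS
  have : q ∣ 1 := by exact_mod_cast hqS
  exact hq.one_lt.ne' (Nat.eq_one_of_dvd_one this)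
end
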